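/- arXiv:2101.12420 — 11 statements merged into one kernel-verified Lean document; each statement's English description precedes it below -/
import Mathlib

section
/- Let C be a symmetric matrix supported on a subset S of indices (all entries outside the S×S block are zero). Suppose I - δG and I - δ(G+C) are invertible, and let x̂* = (I - δ(G+C))^{-1}θ. Then x̂* = (I - δG)^{-1}(θ + Δθ) where Δθ is the vector that is zero outside S and equals δ C_{SS} x̂*_S on S. That is, a structural intervention C is outcome-equivalent to the characteristic intervention Δθ supported on S. -/
/-!
Writing `x̂* = (I - δ(G + C))⁻¹ θ` as `(I - δG) x̂* = θ + δ C x̂*` shows that the structural change `C`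
acts on the equilibrium exactly like the shift `δ C x̂*` of the characteristics; the rows of `C`
outside `S` vanish, so this shift is supported on `S`.
-/

open Matrix

namespace Matrix

theorem mulVec_apply_eq_zero_of_row_eq_zero {m n R : Type*} [Fintype n]
    [NonUnitalNonAssocSemiring R] {C : Matrix m n R} {i : m} (hrow : ∀ j, C i j = 0) (x : n → R) : (C *ᵥ x) i = 0 := by
  simp [mulVec, dotProduct, hrow]

variable {m R : Type*} [Fintype m] [DecidableEq m] [CommRing R]

theorem nonsing_inv_mulVec_eq_of_mulVec_eq {A : Matrix m m R} (hA : IsUnit A) {x v : m → R}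
    (h : A *ᵥ x = v) : A⁻¹ *ᵥ v = x := by
  have := hA.invertible
  exact inv_mulVec_eq_vec h.symm

theorem mulVec_nonsing_inv_mulVec {A : Matrix m m R} (hA : IsUnit A) (v : m → R) :
    A *ᵥ (A⁻¹ *ᵥ v) = v := by
  rw [mulVec_mulVec, mul_nonsing_inv _ ((isUnit_iff_isUnit_det A).mp hA), one_mulVec]

theorem sub_nonsing_inv_mulVec_eq {A B : Matrix m m R} (hA : IsUnit A) (hAB : IsUnit (A - B))
    (v : m → R) : (A - B)⁻¹ *ᵥ v = A⁻¹ *ᵥ (v + B *ᵥ ((A - B)⁻¹ *ᵥ v)) := by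
  set x := (A - B)⁻¹ *ᵥ v
  have hx : (A - B) *ᵥ x = v := mulVec_nonsing_inv_mulVec hAB v
  refine (nonsing_inv_mulVec_eq_of_mulVec_eq hA ?_).symm
  rw [← hx, sub_mulVec, sub_add_cancel]

end Matrix

theorem structural_equiv_characteristic_general {n : ℕ} (G C : Matrix (Fin n) (Fin n) ℝ) (δ : ℝ)
    (θ : Fin n → ℝ) (S : Set (Fin n))
    (hsupp : ∀ i j, (i ∉ S ∨ j ∉ S) → C i j = 0)
    (h1 : IsUnit (1 - δ • G)) (h2 : IsUnit (1 - δ • (G + C))) :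
    ((1 - δ • (G + C))⁻¹ *ᵥ θ)
      = (1 - δ • G)⁻¹ *ᵥ (θ + δ • (C *ᵥ ((1 - δ • (G + C))⁻¹ *ᵥ θ))) ∧
    ∀ i ∉ S, (δ • (C *ᵥ ((1 - δ • (G + C))⁻¹ *ᵥ θ))) i = 0 := by
  have hsplit : 1 - δ • (G + C) = (1 - δ • G) - δ • C := by rw [smul_add, sub_add_eq_sub_sub]
  refine ⟨?_, fun i hi => ?_⟩
  · rw [hsplit] at h2 ⊢
    rw [← smul_mulVec]
    exact sub_nonsing_inv_mulVec_eq h1 h2 θ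
  · rw [Pi.smul_apply, mulVec_apply_eq_zero_of_row_eq_zero (fun j => hsupp i j (Or.inl hi)),
      smul_zero]

theorem structural_equiv_characteristic {n : ℕ} (G C : Matrix (Fin n) (Fin n) ℝ) (δ : ℝ)
    (θ : Fin n → ℝ) (S : Set (Fin n)) (hsymG : G.IsSymm) (hsymC : C.IsSymm)
    (hsupp : ∀ i j, (i ∉ S ∨ j ∉ S) → C i j = 0)
    (h1 : IsUnit (1 - δ • G)) (h2 : IsUnit (1 - δ • (G + C))) :
    ((1 - δ • (G + C))⁻¹ *ᵥ θ)
      = (1 - δ • G)⁻¹ *ᵥ (θ + δ • (C *ᵥ ((1 - δ • (G + C))⁻¹ *ᵥ θ))) ∧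
    ∀ i ∉ S, (δ • (C *ᵥ ((1 - δ • (G + C))⁻¹ *ᵥ θ))) i = 0 :=
  structural_equiv_characteristic_general G C δ θ S hsupp h1 h2
end

section
/- Under the hypotheses that I - δG, I - δ(G+C), and I - δ M_{SS}(G) C_{SS} are invertible (where M(G) = (I - δG)^{-1} and C is supported on S×S), the restriction of the post-intervention equilibrium to S satisfies x̂*_S = (I - δ M_{SS}(G) C_{SS})^{-1} b_S(G, θ), where b(G,θ) = (I - δG)^{-1}θ. -/
open Matrix

/-- The block of a matrix with rows in `S` and columns in `T`. -/
def blk {n : ℕ} (A : Matrix (Fin n) (Fin n) ℝ) (S T : Finset (Fin n)) :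
    Matrix {x // x ∈ S} {x // x ∈ T} ℝ :=
  A.submatrix Subtype.val Subtype.val

/-- Restriction of a vector to the coordinates in `S`. -/
def restr {n : ℕ} (v : Fin n → ℝ) (S : Finset (Fin n)) : {x // x ∈ S} → ℝ :=
  fun i => v i.val

/-!
By the second resolvent identity, `x̂* = b + δ M C x̂*` with `M = (I - δG)⁻¹` and `b = M θ`.
Because `C` is supported on `S × S`, the restriction of this identity to `S` involves only
`M_SS`, `C_SS` and `x̂*_S`, so `x̂*_S = b_S + δ M_SS C_SS x̂*_S`, which the invertibility of
`I - δ M_SS C_SS` solves.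
-/

section

variable {ι m m' R : Type*} [Fintype ι]

theorem Matrix.mulVec_comp_eq_submatrix_mulVec [NonUnitalNonAssocSemiring R] (A : Matrix m ι R)
    (f : m' → m) (s : Finset ι) (v : ι → R) (h : ∀ i, ∀ j ∉ s, A (f i) j * v j = 0) :
    (A *ᵥ v) ∘ f = A.submatrix f (Subtype.val : s → ι) *ᵥ (v ∘ Subtype.val) := by
  funext i
  simp only [Function.comp_apply, mulVec, dotProduct, submatrix_apply]
  rw [Finset.sum_coe_sort s fun j => A (f i) j * v j]
  exact (Finset.sum_subset (Finset.subset_univ s) fun j _ hj => h i j hj).symm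

theorem Matrix.mul_mulVec_comp_val_of_support [NonUnitalSemiring R] (P C : Matrix ι ι R)
    (s : Finset ι) (hC : ∀ i j, (i ∉ s ∨ j ∉ s) → C i j = 0) (x : ι → R) :
    ((P * C) *ᵥ x) ∘ (Subtype.val : s → ι) =
      (P.submatrix Subtype.val Subtype.val * C.submatrix Subtype.val Subtype.val : Matrix s s R) *ᵥ
        (x ∘ Subtype.val) := by
  have hCx : ∀ j ∉ s, (C *ᵥ x) j = 0 := fun j hj => by
    simp [mulVec, dotProduct, hC j _ (Or.inl hj)]
  rw [← mulVec_mulVec, ← mulVec_mulVec,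
    mulVec_comp_eq_submatrix_mulVec P _ s _ fun i j hj => by simp [hCx j hj],
    mulVec_comp_eq_submatrix_mulVec C _ s x fun i j hj => by simp [hC _ j (Or.inr hj)]]

variable [DecidableEq ι] [CommRing R] {δ : R}

theorem Matrix.inv_one_sub_smul_add (K L : Matrix ι ι R) (hK : IsUnit (1 - δ • K))
    (hKL : IsUnit (1 - δ • (K + L))) :
    (1 - δ • (K + L))⁻¹ = (1 - δ • K)⁻¹ + δ • ((1 - δ • K)⁻¹ * L * (1 - δ • (K + L))⁻¹) := by
  have h := inv_sub_inv (A := 1 - δ • K) (B := 1 - δ • (K + L)) ⟨fun _ => hKL, fun _ => hK⟩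
  rw [show 1 - δ • (K + L) - (1 - δ • K) = -(δ • L) by rw [smul_add]; abel] at h
  rw [mul_neg, neg_mul, Matrix.mul_smul, Matrix.smul_mul] at h
  rw [← sub_eq_iff_eq_add', ← neg_sub, h, neg_neg]

theorem Matrix.eq_inv_mulVec_of_eq_add_smul_mulVec {K : Matrix ι ι R} {y b : ι → R}
    (hK : IsUnit (1 - δ • K)) (hy : y = b + δ • (K *ᵥ y)) : y = (1 - δ • K)⁻¹ *ᵥ b := by
  have := hK.invertible
  refine (inv_mulVec_eq_vec ?_).symm
  rw [sub_mulVec, one_mulVec, smul_mulVec]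
  nth_rewrite 1 [hy]
  abel

end

theorem post_intervention_on_S_general {n : ℕ} (G C : Matrix (Fin n) (Fin n) ℝ) (δ : ℝ)
    (θ : Fin n → ℝ) (S : Finset (Fin n))
    (hsupp : ∀ i j, (i ∉ S ∨ j ∉ S) → C i j = 0)
    (h1 : IsUnit (1 - δ • G)) (h2 : IsUnit (1 - δ • (G + C)))
    (h3 : IsUnit (1 - δ • (blk ((1 - δ • G)⁻¹) S S * blk C S S))) :
    restr ((1 - δ • (G + C))⁻¹ *ᵥ θ) S
      = (1 - δ • (blk ((1 - δ • G)⁻¹) S S * blk C S S))⁻¹ *ᵥ restr ((1 - δ • G)⁻¹ *ᵥ θ) S := by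
  have hx := congrFun (congrArg mulVec (inv_one_sub_smul_add G C h1 h2)) θ
  rw [add_mulVec, smul_mulVec, ← mulVec_mulVec] at hx
  refine eq_inv_mulVec_of_eq_add_smul_mulVec h3 ?_
  exact (congrArg (· ∘ Subtype.val) hx).trans
    (congrArg (HAdd.hAdd _) (congrArg (δ • ·) (mul_mulVec_comp_val_of_support _ C S hsupp _)))

theorem post_intervention_on_S {n : ℕ} (G C : Matrix (Fin n) (Fin n) ℝ) (δ : ℝ)
    (θ : Fin n → ℝ) (S : Finset (Fin n)) (hsymG : G.IsSymm) (hsymC : C.IsSymm)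
    (hsupp : ∀ i j, (i ∉ S ∨ j ∉ S) → C i j = 0)
    (h1 : IsUnit (1 - δ • G)) (h2 : IsUnit (1 - δ • (G + C)))
    (h3 : IsUnit (1 - δ • (blk ((1 - δ • G)⁻¹) S S * blk C S S))) :
    restr ((1 - δ • (G + C))⁻¹ *ᵥ θ) S
      = (1 - δ • (blk ((1 - δ • G)⁻¹) S S * blk C S S))⁻¹ *ᵥ restr ((1 - δ • G)⁻¹ *ᵥ θ) S :=
  post_intervention_on_S_general G C δ θ S hsupp h1 h2 h3
end

section
/- With the same hypotheses, for any subset A of indices, the change in equilibrium actions restricted to A is Δx*_A = M_{AS}(G) Δθ*_S, and the change in aggregate action is Δx* = b_S(G,1)ᵀ Δθ*_S, where Δθ*_S = δ C_{SS} (I - δ M_{SS}(G) C_{SS})^{-1} b_S(G, θ). -/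
/-!
Write `M = (I - δG)⁻¹` and `x = (I - δ(G + C))⁻¹ θ`. The resolvent identity gives
`Δx* = x - Mθ = δ M C x`. Because `C` lives on the `S × S` block, `C x` is supported on `S` and
only sees `x_S`, so `Δx*_A = δ M_{AS} C_{SS} x_S` for every `A`. Taking `A = S` turns this into the
linear system `(I - δ M_{SS} C_{SS}) x_S = b_S(G, θ)`, which determines `x_S`. For the aggregate,
symmetry of `M` gives `1ᵀ M v = (M 1) ⬝ v`, and `v = C x` is again supported on `S`.
-/

open Matrix

theorem inv_sub_sub_inv {m α : Type*} [Fintype m] [DecidableEq m] [CommRing α]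
    {L D : Matrix m m α} (hL : IsUnit L) (hLD : IsUnit (L - D)) :
    (L - D)⁻¹ - L⁻¹ = L⁻¹ * D * (L - D)⁻¹ := by
  rw [← neg_sub, inv_sub_inv (iff_of_true hL hLD), sub_sub_cancel_left, mul_neg, neg_mul, neg_neg]

theorem sum_mulVec_eq_mulVec_one_dotProduct {m α : Type*} [Fintype m] [CommSemiring α]
    {A : Matrix m m α} (hA : A.IsSymm) (w : m → α) :
    ∑ i, (A *ᵥ w) i = (A *ᵥ 1) ⬝ᵥ w := by
  rw [← one_dotProduct, dotProduct_mulVec, ← mulVec_transpose, hA.eq]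

section Restriction

variable {n : ℕ} {S : Finset (Fin n)}

theorem dotProduct_eq_restr_dotProduct_of_left {v : Fin n → ℝ} (w : Fin n → ℝ)
    (hv : ∀ j ∉ S, v j = 0) : v ⬝ᵥ w = restr v S ⬝ᵥ restr w S := by
  simp only [dotProduct, restr]
  rw [Finset.sum_coe_sort S (fun j => v j * w j)]
  exact (Finset.sum_subset (Finset.subset_univ S) fun j _ hj => by rw [hv j hj, zero_mul]).symm

theorem dotProduct_eq_restr_dotProduct_of_right (v : Fin n → ℝ) {w : Fin n → ℝ}
    (hw : ∀ j ∉ S, w j = 0) : v ⬝ᵥ w = restr v S ⬝ᵥ restr w S := by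
  rw [dotProduct_comm, dotProduct_eq_restr_dotProduct_of_left v hw, dotProduct_comm]

theorem restr_mulVec_of_support (P : Matrix (Fin n) (Fin n) ℝ) {w : Fin n → ℝ}
    (A : Finset (Fin n)) (hw : ∀ j ∉ S, w j = 0) :
    restr (P *ᵥ w) A = blk P A S *ᵥ restr w S :=
  funext fun i => dotProduct_eq_restr_dotProduct_of_right (P i) hw

variable {C : Matrix (Fin n) (Fin n) ℝ}

theorem mulVec_apply_eq_zero_of_blockSupport (hC : ∀ i j, (i ∉ S ∨ j ∉ S) → C i j = 0)
    (v : Fin n → ℝ) {i : Fin n} (hi : i ∉ S) :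
    (C *ᵥ v) i = 0 := by
  simp only [mulVec, dotProduct]
  exact Finset.sum_eq_zero fun j _ => by rw [hC i j (Or.inl hi), zero_mul]

theorem restr_mulVec_of_blockSupport (hC : ∀ i j, (i ∉ S ∨ j ∉ S) → C i j = 0)
    (v : Fin n → ℝ) :
    restr (C *ᵥ v) S = blk C S S *ᵥ restr v S :=
  funext fun i => dotProduct_eq_restr_dotProduct_of_left v fun j hj => hC i j (Or.inr hj)

end Restriction

theorem effects_of_structural_intervention_general {n : ℕ} (G C : Matrix (Fin n) (Fin n) ℝ) (δ : ℝ)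
    (θ : Fin n → ℝ) (S : Finset (Fin n)) (hsymG : G.IsSymm)
    (hsupp : ∀ i j, (i ∉ S ∨ j ∉ S) → C i j = 0)
    (h1 : IsUnit (1 - δ • G)) (h2 : IsUnit (1 - δ • (G + C)))
    (h3 : IsUnit (1 - δ • (blk ((1 - δ • G)⁻¹) S S * blk C S S))) :
    (∀ A : Finset (Fin n),
      restr (((1 - δ • (G + C))⁻¹ *ᵥ θ) - ((1 - δ • G)⁻¹ *ᵥ θ)) A
        = blk ((1 - δ • G)⁻¹) A S *ᵥ
            (δ • (blk C S S *ᵥ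
              ((1 - δ • (blk ((1 - δ • G)⁻¹) S S * blk C S S))⁻¹ *ᵥ
                restr ((1 - δ • G)⁻¹ *ᵥ θ) S)))) ∧
    (∑ i, (((1 - δ • (G + C))⁻¹ *ᵥ θ) i - ((1 - δ • G)⁻¹ *ᵥ θ) i))
      = restr ((1 - δ • G)⁻¹ *ᵥ fun _ => 1) S ⬝ᵥ
          (δ • (blk C S S *ᵥ
            ((1 - δ • (blk ((1 - δ • G)⁻¹) S S * blk C S S))⁻¹ *ᵥ
              restr ((1 - δ • G)⁻¹ *ᵥ θ) S))) := by
  set M := (1 - δ • G)⁻¹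
  set K := 1 - δ • (blk M S S * blk C S S)
  set x := (1 - δ • (G + C))⁻¹ *ᵥ θ
  have hsplit : 1 - δ • (G + C) = (1 - δ • G) - δ • C := by rw [smul_add, sub_add_eq_sub_sub]
  have hΔ : x - M *ᵥ θ = δ • (M *ᵥ (C *ᵥ x)) := by
    rw [← sub_mulVec, hsplit, inv_sub_sub_inv h1 (hsplit ▸ h2), ← hsplit, mul_smul_comm,
      smul_mul_assoc, smul_mulVec, ← mulVec_mulVec, ← mulVec_mulVec]
  have hCx : ∀ j ∉ S, (C *ᵥ x) j = 0 := fun j => mulVec_apply_eq_zero_of_blockSupport hsupp x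
  have hΔA (A : Finset (Fin n)) :
      restr (x - M *ᵥ θ) A = δ • (blk M A S *ᵥ (blk C S S *ᵥ restr x S)) := by
    rw [hΔ, ← restr_mulVec_of_blockSupport hsupp, ← restr_mulVec_of_support M A hCx]
    rfl
  have hxS : restr x S = K⁻¹ *ᵥ restr (M *ᵥ θ) S := by
    have hKx : K *ᵥ restr x S = restr (M *ᵥ θ) S := by
      rw [sub_mulVec, one_mulVec, smul_mulVec, ← mulVec_mulVec, ← hΔA S]
      exact sub_sub_cancel _ _
    rw [← hKx, mulVec_mulVec, nonsing_inv_mul _ ((isUnit_iff_isUnit_det K).mp h3), one_mulVec]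
  refine ⟨fun A => by rw [hΔA A, hxS, mulVec_smul], ?_⟩
  have hM : M.IsSymm := (isSymm_one.sub (hsymG.smul δ)).inv
  calc ∑ i, (x i - (M *ᵥ θ) i)
      = δ * ∑ i, (M *ᵥ (C *ᵥ x)) i := by
        simp only [← Pi.sub_apply, hΔ, Pi.smul_apply, smul_eq_mul, Finset.mul_sum]
    _ = δ * ((M *ᵥ 1) ⬝ᵥ (C *ᵥ x)) := by rw [sum_mulVec_eq_mulVec_one_dotProduct hM]
    _ = _ := by
        rw [dotProduct_eq_restr_dotProduct_of_right _ hCx, restr_mulVec_of_blockSupport hsupp,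
          hxS, dotProduct_smul, smul_eq_mul]
        rfl

theorem effects_of_structural_intervention {n : ℕ} (G C : Matrix (Fin n) (Fin n) ℝ) (δ : ℝ)
    (θ : Fin n → ℝ) (S : Finset (Fin n)) (hsymG : G.IsSymm) (hsymC : C.IsSymm)
    (hsupp : ∀ i j, (i ∉ S ∨ j ∉ S) → C i j = 0)
    (h1 : IsUnit (1 - δ • G)) (h2 : IsUnit (1 - δ • (G + C)))
    (h3 : IsUnit (1 - δ • (blk ((1 - δ • G)⁻¹) S S * blk C S S))) :
    (∀ A : Finset (Fin n),
      restr (((1 - δ • (G + C))⁻¹ *ᵥ θ) - ((1 - δ • G)⁻¹ *ᵥ θ)) A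
        = blk ((1 - δ • G)⁻¹) A S *ᵥ
            (δ • (blk C S S *ᵥ
              ((1 - δ • (blk ((1 - δ • G)⁻¹) S S * blk C S S))⁻¹ *ᵥ
                restr ((1 - δ • G)⁻¹ *ᵥ θ) S)))) ∧
    (∑ i, (((1 - δ • (G + C))⁻¹ *ᵥ θ) i - ((1 - δ • G)⁻¹ *ᵥ θ) i))
      = restr ((1 - δ • G)⁻¹ *ᵥ fun _ => 1) S ⬝ᵥ
          (δ • (blk C S S *ᵥ
            ((1 - δ • (blk ((1 - δ • G)⁻¹) S S * blk C S S))⁻¹ *ᵥ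
              restr ((1 - δ • G)⁻¹ *ᵥ θ) S))) :=
  effects_of_structural_intervention_general G C δ θ S hsymG hsupp h1 h2 h3
end

section
/- Let G and C be symmetric n×n matrices such that I - δG and I - δ(G+C) are symmetric positive definite. Let b(G) = (I - δG)^{-1}1 and b(G+C) = (I - δ(G+C))^{-1}1. Then 1ᵀ b(G+C) - 1ᵀ b(G) ≥ δ · b(G)ᵀ C b(G). In particular, if b(G)ᵀ C b(G) ≥ 0 then the aggregate Katz-Bonacich centrality weakly increases after the structural intervention C. -/
open Matrix

theorem aggregate_lower_bound {n : ℕ} (G C : Matrix (Fin n) (Fin n) ℝ) (δ : ℝ)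
    (hδ : 0 < δ) (hsG : G.IsSymm) (hsC : C.IsSymm)
    (hG : (1 - δ • G).PosDef) (hGC : (1 - δ • (G + C)).PosDef) :
    ((∑ i, ((1 - δ • (G + C))⁻¹ *ᵥ fun _ => (1 : ℝ)) i)
        - ∑ i, ((1 - δ • G)⁻¹ *ᵥ fun _ => (1 : ℝ)) i)
      ≥ δ * (((1 - δ • G)⁻¹ *ᵥ fun _ => (1 : ℝ)) ⬝ᵥ
              (C *ᵥ ((1 - δ • G)⁻¹ *ᵥ fun _ => (1 : ℝ)))) ∧
    ((((1 - δ • G)⁻¹ *ᵥ fun _ => (1 : ℝ)) ⬝ᵥ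
        (C *ᵥ ((1 - δ • G)⁻¹ *ᵥ fun _ => (1 : ℝ)))) ≥ 0 →
      (∑ i, ((1 - δ • G)⁻¹ *ᵥ fun _ => (1 : ℝ)) i)
        ≤ ∑ i, ((1 - δ • (G + C))⁻¹ *ᵥ fun _ => (1 : ℝ)) i) := by
  set A := (1 : Matrix (Fin n) (Fin n) ℝ) - δ • G with hA
  set B := (1 : Matrix (Fin n) (Fin n) ℝ) - δ • (G + C) with hB
  have hAdet : IsUnit A.det := isUnit_iff_ne_zero.2 hG.det_pos.ne'
  have hBdet : IsUnit B.det := isUnit_iff_ne_zero.2 hGC.det_pos.ne'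
  set e : Fin n → ℝ := fun _ => (1 : ℝ) with he
  set u := A⁻¹ *ᵥ e with hu
  set v := B⁻¹ *ᵥ e with hv
  set w := C *ᵥ u with hw
  have hABsub : A - B = δ • C := by
    rw [hA, hB, smul_add]; abel
  have hkey : B⁻¹ - A⁻¹ = δ • (B⁻¹ * C * A⁻¹) := by
    have h1 : B⁻¹ * (A - B) * A⁻¹ = B⁻¹ - A⁻¹ := by
      rw [Matrix.mul_sub, Matrix.sub_mul, Matrix.nonsing_inv_mul _ hBdet,
        Matrix.mul_assoc, Matrix.mul_nonsing_inv _ hAdet, Matrix.mul_one, Matrix.one_mul]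
    rw [← h1, hABsub]
    simp [Matrix.mul_smul, Matrix.smul_mul]
  have hvu : v - u = δ • (B⁻¹ *ᵥ w) := by
    rw [hv, hu, ← Matrix.sub_mulVec, hkey, Matrix.smul_mulVec, hw, hu,
      ← Matrix.mulVec_mulVec, ← Matrix.mulVec_mulVec]
  have hBinv : (B⁻¹).PosDef := hGC.inv
  have hBsym : (B⁻¹)ᵀ = B⁻¹ := hBinv.isHermitian.eq
  have hnn : 0 ≤ (B⁻¹ *ᵥ w) ⬝ᵥ w := by
    rw [dotProduct_comm]
    simpa using hBinv.posSemidef.dotProduct_mulVec_nonneg w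
  have hsum : (∑ i, v i) - ∑ i, u i = δ * (v ⬝ᵥ w) := by
    have h2 : (∑ i, v i) - ∑ i, u i = e ⬝ᵥ (v - u) := by
      simp [dotProduct, he, Finset.sum_sub_distrib]
    rw [h2, hvu, dotProduct_smul, smul_eq_mul, dotProduct_mulVec, ← mulVec_transpose,
      hBsym, ← hv]
  have hvw : v ⬝ᵥ w = u ⬝ᵥ w + δ * ((B⁻¹ *ᵥ w) ⬝ᵥ w) := by
    have h3 : (v - u) ⬝ᵥ w = δ * ((B⁻¹ *ᵥ w) ⬝ᵥ w) := by
      rw [hvu, smul_dotProduct, smul_eq_mul]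
    have := sub_dotProduct v u w
    linarith [this.symm.trans h3]
  have hmain : (∑ i, v i) - ∑ i, u i ≥ δ * (u ⬝ᵥ w) := by
    rw [hsum, hvw]
    nlinarith [mul_nonneg (mul_nonneg hδ.le hδ.le) hnn]
  exact ⟨hmain, fun h => by nlinarith [hmain, mul_nonneg hδ.le h]⟩
end

section
/- For a single node i (with m_{ii}(G) ≠ 0), the intercentrality satisfies d_{\{i\}}(G,θ) = b_i(G,1)·b_i(G,θ)/m_{ii}(G), where m_{ii}(G) is the (i,i) entry of (I - δG)^{-1}. -/
/-!
Write `A = 1 - δ • G` and `x = A⁻¹ θ`. The vector `v = x - (xᵢ / A⁻¹ᵢᵢ) • A⁻¹ eᵢ` vanishes at `i`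
and `A v = θ - (xᵢ / A⁻¹ᵢᵢ) • eᵢ`, so the restriction of `v` solves the system with node `i`
deleted. Summing, the total activity drops by `(∑ⱼ A⁻¹ⱼᵢ) xᵢ / A⁻¹ᵢᵢ`, and by symmetry of `A⁻¹`
the column sum `∑ⱼ A⁻¹ⱼᵢ` is the Katz–Bonacich centrality `bᵢ(G, 1)`.
-/

open Matrix

section

variable {ι K : Type*} [Fintype ι] [DecidableEq ι] [Field K]

lemma Fintype.sum_sub_sum_subtype_ne_sub_mul_div (x c : ι → K) {i : ι} (hc : c i ≠ 0) :
    ∑ j, x j - ∑ j : {x // x ≠ i}, (x j - c j * x i / c i) = (∑ j, c j) * x i / c i := by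
  rw [Fintype.sum_eq_add_sum_subtype_ne x i, Fintype.sum_eq_add_sum_subtype_ne c i,
    Finset.sum_sub_distrib, ← Finset.sum_div, ← Finset.sum_mul]
  field_simp
  ring

namespace Matrix

lemma submatrix_ne_mulVec_of_apply_eq_zero (A : Matrix ι ι K) {i : ι} {v : ι → K}
    (hv : v i = 0) (j : {x // x ≠ i}) :
    (A.submatrix Subtype.val Subtype.val *ᵥ fun k : {x // x ≠ i} => v k) j = (A *ᵥ v) j := by
  simp only [mulVec, dotProduct, submatrix_apply, Fintype.sum_eq_add_sum_subtype_ne _ i, hv,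
    mul_zero, zero_add]

lemma inv_submatrix_ne_mulVec {A : Matrix ι ι K} (hA : IsUnit A) {i : ι} (hi : A⁻¹ i i ≠ 0)
    (hAi : IsUnit (A.submatrix (Subtype.val : {x // x ≠ i} → ι) (Subtype.val : {x // x ≠ i} → ι)))
    (b : ι → K) :
    (A.submatrix (Subtype.val : {x // x ≠ i} → ι) (Subtype.val : {x // x ≠ i} → ι))⁻¹ *ᵥ
        (fun k : {x // x ≠ i} => b k) =
      fun j : {x // x ≠ i} => (A⁻¹ *ᵥ b) j - A⁻¹ j i * (A⁻¹ *ᵥ b) i / A⁻¹ i i := by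
  have := hA.invertible
  have := hAi.invertible
  let v := A⁻¹ *ᵥ (b - ((A⁻¹ *ᵥ b) i / A⁻¹ i i) • Pi.single i 1)
  have hv_apply (j : ι) : v j = (A⁻¹ *ᵥ b) j - A⁻¹ j i * (A⁻¹ *ᵥ b) i / A⁻¹ i i := by
    simp only [v, mulVec_sub, mulVec_smul, mulVec_single_one, Pi.sub_apply, Pi.smul_apply,
      col_apply, smul_eq_mul]
    ring
  have hv : v i = 0 := by
    rw [hv_apply, mul_div_cancel_left₀ _ hi, sub_self]
  simp_rw [← hv_apply]
  refine inv_mulVec_eq_vec (funext fun j => ?_)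
  rw [submatrix_ne_mulVec_of_apply_eq_zero A hv, mulVec_mulVec, mul_inv_of_invertible, one_mulVec]
  simp [j.prop]

end Matrix

end

theorem single_node_intercentrality {n : ℕ} (G : Matrix (Fin n) (Fin n) ℝ) (δ : ℝ)
    (θ : Fin n → ℝ) (i : Fin n) (hsym : G.IsSymm) (h1 : IsUnit (1 - δ • G))
    (h2 : IsUnit (1 - δ • G.submatrix (Subtype.val : {x : Fin n // x ≠ i} → Fin n) (Subtype.val : {x : Fin n // x ≠ i} → Fin n)))
    (hm : ((1 - δ • G)⁻¹) i i ≠ 0) :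
    ((∑ j, ((1 - δ • G)⁻¹ *ᵥ θ) j)
        - ∑ j : {x : Fin n // x ≠ i},
            ((1 - δ • G.submatrix (Subtype.val : {x : Fin n // x ≠ i} → Fin n) (Subtype.val : {x : Fin n // x ≠ i} → Fin n))⁻¹ *ᵥ
              fun a => θ a.val) j)
      = ((1 - δ • G)⁻¹ *ᵥ fun _ => 1) i * ((1 - δ • G)⁻¹ *ᵥ θ) i / ((1 - δ • G)⁻¹) i i := by
  set A := 1 - δ • G
  have hA : A.IsSymm := isSymm_one.sub (hsym.smul δ)
  have hsub : 1 - δ • G.submatrix (Subtype.val : {x : Fin n // x ≠ i} → Fin n)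
      (Subtype.val : {x : Fin n // x ≠ i} → Fin n) = A.submatrix Subtype.val Subtype.val := by
    ext j k
    simp [A, one_apply, Subtype.ext_iff]
  have hrowsum_eq_colsum : (A⁻¹ *ᵥ fun _ => 1) i = ∑ j, A⁻¹ j i := by
    simp [mulVec, dotProduct, hA.inv.apply]
  rw [hsub] at h2 ⊢
  rw [inv_submatrix_ne_mulVec h1 hm h2, hrowsum_eq_colsum]
  exact Fintype.sum_sub_sum_subtype_ne_sub_mul_div _ (fun j => A⁻¹ j i) hm
end

section
/- Monotonicity of group intercentrality: if S ⊆ S' ⊆ N and θ = 1 (with all relevant matrices invertible and M(G) entrywise nonnegative arising from 0 ≤ δ < 1/λ_max(G) and G nonnegative symmetric), then d_S(G,1) ≤ d_{S'}(G,1). -/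
open Matrix
open scoped ENNReal NNReal

set_option linter.unusedSectionVars false

section helpers

variable {ι κ : Type*} [Fintype ι] [Fintype κ] [DecidableEq ι] [DecidableEq κ]

lemma myPow_entry_nonneg {A : Matrix ι ι ℝ} (h : ∀ i j, 0 ≤ A i j) :
    ∀ (k : ℕ) (i j : ι), 0 ≤ (A ^ k) i j := by
  intro k
  induction k with
  | zero =>
      intro i j
      rw [pow_zero]
      by_cases hij : i = j <;> simp [Matrix.one_apply, hij]
  | succ k ih =>
      intro i j
      rw [pow_succ, Matrix.mul_apply]
      exact Finset.sum_nonneg fun l _ => mul_nonneg (ih i l) (h l j)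

lemma mySum_comp_le {g : ι → ℝ} (hg : ∀ i, 0 ≤ g i) {f : κ → ι} (hf : Function.Injective f) :
    ∑ x : κ, g (f x) ≤ ∑ i : ι, g i := by
  have h1 : ∑ x : κ, g (f x) = ∑ i ∈ Finset.univ.image f, g i :=
    (Finset.sum_image (fun x _ y _ h => hf h)).symm
  rw [h1]
  exact Finset.sum_le_sum_of_subset_of_nonneg (Finset.subset_univ _) fun i _ _ => hg i

lemma mySubmatrix_pow_le {A : Matrix ι ι ℝ} (hA : ∀ i j, 0 ≤ A i j)
    {f : κ → ι} (hf : Function.Injective f) :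
    ∀ (k : ℕ) (i j : κ), ((A.submatrix f f) ^ k) i j ≤ (A ^ k) (f i) (f j) := by
  intro k
  induction k with
  | zero =>
      intro i j
      rw [pow_zero, pow_zero]
      by_cases hij : i = j
      · simp [Matrix.one_apply, hij]
      · rw [Matrix.one_apply_ne hij, Matrix.one_apply_ne (fun h => hij (hf h))]
  | succ k ih =>
      intro i j
      rw [pow_succ, pow_succ, Matrix.mul_apply, Matrix.mul_apply]
      calc ∑ l : κ, ((A.submatrix f f) ^ k) i l * (A.submatrix f f) l j
          ≤ ∑ l : κ, (A ^ k) (f i) (f l) * A (f l) (f j) := by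
            apply Finset.sum_le_sum
            intro l _
            rw [Matrix.submatrix_apply]
            exact mul_le_mul_of_nonneg_right (ih i l) (hA _ _)
        _ ≤ ∑ l : ι, (A ^ k) (f i) l * A l (f j) :=
            mySum_comp_le (g := fun l => (A ^ k) (f i) l * A l (f j)) (fun l => mul_nonneg (myPow_entry_nonneg hA k _ _) (hA _ _)) hf

end helpers


section neumann

variable {ι : Type*} [Fintype ι] [DecidableEq ι]

lemma myNeumann {A : Matrix ι ι ℝ} {C r : ℝ} (hr0 : 0 ≤ r) (hr1 : r < 1)
    (hb : ∀ (k : ℕ) (i j : ι), |(A ^ k) i j| ≤ C * r ^ k) :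
    (1 - A)⁻¹ = Matrix.of fun i j => ∑' k : ℕ, (A ^ k) i j := by
  have hsum : ∀ i j, Summable fun k : ℕ => (A ^ k) i j := by
    intro i j
    apply Summable.of_norm_bounded ((summable_geometric_of_lt_one hr0 hr1).mul_left C)
    intro k
    simpa [Real.norm_eq_abs] using hb k i j
  apply Matrix.inv_eq_right_inv
  ext i j
  rw [Matrix.mul_apply]
  have hAN : ∀ l : ι, (1 - A) i l * (Matrix.of fun i j => ∑' k : ℕ, (A ^ k) i j) l j
      = ∑' k : ℕ, (1 - A) i l * (A ^ k) l j := by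
    intro l
    simp only [Matrix.of_apply]
    rw [tsum_mul_left]
  simp only [hAN]
  rw [← Summable.tsum_finsetSum (fun l _ => ((hsum l j).mul_left _))]
  have key : ∀ k : ℕ, ∑ l : ι, (1 - A) i l * (A ^ k) l j
      = (A ^ k) i j - (A ^ (k + 1)) i j := by
    intro k
    have : ∑ l : ι, (1 - A) i l * (A ^ k) l j = ((1 - A) * A ^ k) i j :=
      (Matrix.mul_apply).symm
    rw [this, sub_mul, one_mul, Matrix.sub_apply, ← pow_succ']
  simp only [key]
  have hsucc : Summable fun k : ℕ => (A ^ (k + 1)) i j :=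
    (hsum i j).comp_injective (add_left_injective 1)
  rw [Summable.tsum_sub (hsum i j) hsucc]
  rw [Summable.tsum_eq_zero_add (hsum i j)]
  simp [Matrix.one_apply]

end neumann


lemma myBound {n : ℕ} (hn : 0 < n) (G : Matrix (Fin n) (Fin n) ℝ) (δ : ℝ)
    (hsym : G.IsSymm) (hδ : 0 ≤ δ)
    (hlt : ENNReal.ofReal δ * spectralRadius ℝ G < 1) :
    ∃ r : ℝ, 0 ≤ r ∧ r < 1 ∧
      ∀ (k : ℕ) (i j : Fin n), |((δ • G) ^ k) i j| ≤ (n : ℝ) * r ^ k := by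
  haveI : Nonempty (Fin n) := ⟨⟨0, hn⟩⟩
  have hA : G.IsHermitian := by
    rwa [Matrix.IsHermitian, conjTranspose_eq_transpose_of_trivial]
  set ev : Fin n → ℝ := hA.eigenvalues with hev
  set U : Matrix (Fin n) (Fin n) ℝ := (hA.eigenvectorUnitary : Matrix (Fin n) (Fin n) ℝ) with hU
  set r : ℝ := Finset.univ.sup' Finset.univ_nonempty (fun m => δ * |ev m|) with hr
  have hr0 : 0 ≤ r := by
    obtain ⟨m0⟩ := (inferInstance : Nonempty (Fin n))
    exact le_trans (mul_nonneg hδ (abs_nonneg _))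
      (Finset.le_sup' (fun m => δ * |ev m|) (Finset.mem_univ m0))
  have hrm : ∀ m, δ * |ev m| ≤ r := fun m =>
    Finset.le_sup' (fun m => δ * |ev m|) (Finset.mem_univ m)
  have hr1 : r < 1 := by
    rw [hr, Finset.sup'_lt_iff]
    intro m _
    have hm : ev m ∈ spectrum ℝ G := hA.eigenvalues_mem_spectrum_real m
    have h1 : (‖ev m‖₊ : ℝ≥0∞) ≤ spectralRadius ℝ G := by
      show (‖ev m‖₊ : ℝ≥0∞) ≤ ⨆ k ∈ spectrum ℝ G, (‖k‖₊ : ℝ≥0∞)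
      exact le_iSup₂ (f := fun k (_ : k ∈ spectrum ℝ G) => (‖k‖₊ : ℝ≥0∞)) (ev m) hm
    have h2 : ENNReal.ofReal (δ * |ev m|) < 1 := by
      calc ENNReal.ofReal (δ * |ev m|)
          = ENNReal.ofReal δ * ENNReal.ofReal |ev m| := ENNReal.ofReal_mul hδ
        _ = ENNReal.ofReal δ * (‖ev m‖₊ : ℝ≥0∞) := by rw [← enorm_eq_nnnorm, Real.enorm_eq_ofReal_abs]
        _ ≤ ENNReal.ofReal δ * spectralRadius ℝ G := by
            exact mul_le_mul_right h1 _
        _ < 1 := hlt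
    rw [ENNReal.ofReal_lt_one] at h2
    exact h2
  have hUU : star U * U = 1 := (Unitary.mem_iff.mp hA.eigenvectorUnitary.2).1
  have hUU' : U * star U = 1 := (Unitary.mem_iff.mp hA.eigenvectorUnitary.2).2
  have hU1 : ∀ i m, |U i m| ≤ 1 := by
    intro i m
    have h1 : ((star U * U) m m : ℝ) = 1 := by rw [hUU, Matrix.one_apply_eq]
    rw [Matrix.mul_apply] at h1
    have h2 : ∑ l, U l m * U l m = 1 := by
      rw [← h1]
      refine Finset.sum_congr rfl fun l _ => ?_
      rw [Matrix.star_apply, star_trivial]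
    rw [abs_le_one_iff_mul_self_le_one, ← h2]
    exact Finset.single_le_sum (f := fun l => U l m * U l m)
      (fun l _ => mul_self_nonneg _) (Finset.mem_univ i)
  have hGk : ∀ k : ℕ, G ^ k = U * Matrix.diagonal (fun m => ev m ^ k) * star U := by
    intro k
    induction k with
    | zero =>
        simp only [pow_zero]
        rw [show Matrix.diagonal (fun _ : Fin n => (1 : ℝ)) = 1 from Matrix.diagonal_one,
          mul_one, hUU']
    | succ k ih =>
        have hspec : G = U * Matrix.diagonal (fun m => ev m) * star U := by
          have h := hA.spectral_theorem
          simpa [RCLike.ofReal_real_eq_id, Function.comp] using h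
        have key : ∀ X : Matrix (Fin n) (Fin n) ℝ, star U * (U * X) = X := by
          intro X; rw [← mul_assoc, hUU, one_mul]
        have hDD : Matrix.diagonal (fun m => ev m ^ k) * Matrix.diagonal (fun m => ev m)
            = Matrix.diagonal (fun m => ev m ^ (k + 1)) := by
          rw [Matrix.diagonal_mul_diagonal]
          simp [pow_succ]
        calc G ^ (k + 1) = G ^ k * G := pow_succ G k
          _ = (U * Matrix.diagonal (fun m => ev m ^ k)) *
              (star U * (U * (Matrix.diagonal (fun m => ev m) * star U))) := by
              rw [ih, hspec]; simp only [Matrix.mul_assoc]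
          _ = (U * (Matrix.diagonal (fun m => ev m ^ k) * Matrix.diagonal (fun m => ev m)))
              * star U := by rw [key]; try simp only [Matrix.mul_assoc]
          _ = U * Matrix.diagonal (fun m => ev m ^ (k + 1)) * star U := by
              rw [hDD, Matrix.mul_assoc]
  refine ⟨r, hr0, hr1, fun k i j => ?_⟩
  have hGentry : |(G ^ k) i j| ≤ ∑ m, |ev m| ^ k := by
    rw [hGk k]
    have hentry : (U * Matrix.diagonal (fun m => ev m ^ k) * star U) i j
        = ∑ m, U i m * ev m ^ k * U j m := by
      rw [Matrix.mul_apply]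
      refine Finset.sum_congr rfl fun m _ => ?_
      rw [Matrix.mul_diagonal, Matrix.star_apply, star_trivial]
    rw [hentry]
    calc |∑ m, U i m * ev m ^ k * U j m| ≤ ∑ m, |U i m * ev m ^ k * U j m| :=
          Finset.abs_sum_le_sum_abs _ _
      _ ≤ ∑ m, |ev m| ^ k := by
          refine Finset.sum_le_sum fun m _ => ?_
          rw [abs_mul, abs_mul, abs_pow]
          calc |U i m| * |ev m| ^ k * |U j m| ≤ 1 * |ev m| ^ k * 1 := by
                apply mul_le_mul (mul_le_mul (hU1 i m) le_rfl (by positivity) zero_le_one)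
                  (hU1 j m) (abs_nonneg _) (by positivity)
            _ = |ev m| ^ k := by ring
  have h3 : |((δ • G) ^ k) i j| = δ ^ k * |(G ^ k) i j| := by
    rw [smul_pow, Matrix.smul_apply, smul_eq_mul, abs_mul, abs_pow, abs_of_nonneg hδ]
  rw [h3]
  calc δ ^ k * |(G ^ k) i j| ≤ δ ^ k * ∑ m, |ev m| ^ k :=
        mul_le_mul_of_nonneg_left hGentry (by positivity)
    _ = ∑ m, (δ * |ev m|) ^ k := by rw [Finset.mul_sum]; simp [mul_pow]
    _ ≤ ∑ m : Fin n, r ^ k :=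
        Finset.sum_le_sum fun m _ => pow_le_pow_left₀ (by positivity) (hrm m) k
    _ = (n : ℝ) * r ^ k := by
        rw [Finset.sum_const, Finset.card_univ, Fintype.card_fin, nsmul_eq_mul]


section mainproof

lemma mySubInv {n : ℕ} {M : Matrix (Fin n) (Fin n) ℝ} {C r : ℝ}
    (hMnn : ∀ i j, 0 ≤ M i j) (hr0 : 0 ≤ r) (hr1 : r < 1)
    (hb : ∀ (k : ℕ) (i j : Fin n), |(M ^ k) i j| ≤ C * r ^ k)
    {κ : Type*} [Fintype κ] [DecidableEq κ] {e : κ → Fin n} (he : Function.Injective e) :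
    ∀ (k : ℕ) (i j : κ), |((M.submatrix e e) ^ k) i j| ≤ C * r ^ k := by
  intro k i j
  have h2 : 0 ≤ ((M.submatrix e e) ^ k) i j :=
    myPow_entry_nonneg (fun i j => hMnn _ _) k i j
  rw [abs_of_nonneg h2]
  exact le_trans (mySubmatrix_pow_le hMnn he k i j)
    (le_trans (le_abs_self _) (hb k _ _))

/-- The group intercentrality of `S` with `θ = 1`: the aggregate Katz-Bonacich centrality
of the whole network minus that of the network with the nodes of `S` removed. -/
noncomputable def dS {n : ℕ} (G : Matrix (Fin n) (Fin n) ℝ) (δ : ℝ) (S : Finset (Fin n)) : ℝ :=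
  (∑ i, ((1 - δ • G)⁻¹ *ᵥ fun _ => (1 : ℝ)) i)
    - ∑ i : {x : Fin n // x ∈ Sᶜ},
        ((1 - δ • G.submatrix (Subtype.val : {x : Fin n // x ∈ Sᶜ} → Fin n) (Subtype.val : {x : Fin n // x ∈ Sᶜ} → Fin n))⁻¹ *ᵥ
          fun _ => (1 : ℝ)) i

theorem intercentrality_monotone {n : ℕ} (G : Matrix (Fin n) (Fin n) ℝ) (δ : ℝ)
    (hsym : G.IsSymm) (hnn : ∀ i j, 0 ≤ G i j) (hδ : 0 ≤ δ)
    (hlt : ENNReal.ofReal δ * spectralRadius ℝ G < 1)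
    (S S' : Finset (Fin n)) (hSS : S ⊆ S') :
    dS G δ S ≤ dS G δ S' := by
  rcases Nat.eq_zero_or_pos n with hn | hn
  · subst hn
    simp [dS]
  obtain ⟨r, hr0, hr1, hb⟩ := myBound hn G δ hsym hδ hlt
  set M : Matrix (Fin n) (Fin n) ℝ := δ • G with hM
  have hMnn : ∀ i j, 0 ≤ M i j := fun i j => by
    rw [hM, Matrix.smul_apply, smul_eq_mul]
    exact mul_nonneg hδ (hnn i j)
  -- the two index types
  have hcc : S'ᶜ ⊆ Sᶜ := Finset.compl_subset_compl.mpr hSS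
  set κS := {x : Fin n // x ∈ Sᶜ}
  set κS' := {x : Fin n // x ∈ S'ᶜ}
  set eS : κS → Fin n := Subtype.val with heS
  set eS' : κS' → Fin n := Subtype.val with heS'
  have heSi : Function.Injective eS := Subtype.val_injective
  have heS'i : Function.Injective eS' := Subtype.val_injective
  set f : κS' → κS := fun x => ⟨x.1, hcc x.2⟩ with hf
  have hfi : Function.Injective f := fun a b h =>
    Subtype.ext (show ((f a : κS) : Fin n) = ((f b : κS) : Fin n) from congrArg _ h)
  set A := M.submatrix eS eS with hA
  set B := M.submatrix eS' eS' with hB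
  have hBA : B = A.submatrix f f := by
    ext i j
    rfl
  have hAnn : ∀ i j, 0 ≤ A i j := fun i j => hMnn _ _
  have hBnn : ∀ i j, 0 ≤ B i j := fun i j => hMnn _ _
  have hbA : ∀ (k : ℕ) (i j : κS), |(A ^ k) i j| ≤ (n : ℝ) * r ^ k :=
    mySubInv hMnn hr0 hr1 hb heSi
  have hbB : ∀ (k : ℕ) (i j : κS'), |(B ^ k) i j| ≤ (n : ℝ) * r ^ k :=
    mySubInv hMnn hr0 hr1 hb heS'i
  have hsumA : ∀ i j, Summable fun k : ℕ => (A ^ k) i j := fun i j =>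
    Summable.of_norm_bounded ((summable_geometric_of_lt_one hr0 hr1).mul_left _)
      (fun k => by simpa [Real.norm_eq_abs] using hbA k i j)
  have hsumB : ∀ i j, Summable fun k : ℕ => (B ^ k) i j := fun i j =>
    Summable.of_norm_bounded ((summable_geometric_of_lt_one hr0 hr1).mul_left _)
      (fun k => by simpa [Real.norm_eq_abs] using hbB k i j)
  -- inverses as Neumann series
  have hinvA : (1 - A)⁻¹ = Matrix.of fun i j => ∑' k : ℕ, (A ^ k) i j :=
    myNeumann hr0 hr1 hbA
  have hinvB : (1 - B)⁻¹ = Matrix.of fun i j => ∑' k : ℕ, (B ^ k) i j :=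
    myNeumann hr0 hr1 hbB
  -- rewrite dS
  have hmatS : δ • G.submatrix (Subtype.val : κS → Fin n) (Subtype.val : κS → Fin n) = A := by
    ext i j
    simp [hA, hM, heS]
  have hmatS' : δ • G.submatrix (Subtype.val : κS' → Fin n) (Subtype.val : κS' → Fin n) = B := by
    ext i j
    simp [hB, hM, heS']
  rw [dS, dS, hmatS, hmatS']
  apply sub_le_sub_left
  -- reduce to double sums
  have hVA : ∀ i : κS, ((1 - A)⁻¹ *ᵥ fun _ => (1 : ℝ)) i = ∑ j, ∑' k : ℕ, (A ^ k) i j := by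
    intro i
    rw [hinvA]
    simp [Matrix.mulVec, dotProduct]
  have hVB : ∀ i : κS', ((1 - B)⁻¹ *ᵥ fun _ => (1 : ℝ)) i = ∑ j, ∑' k : ℕ, (B ^ k) i j := by
    intro i
    rw [hinvB]
    simp [Matrix.mulVec, dotProduct]
  rw [Finset.sum_congr rfl fun i _ => hVA i, Finset.sum_congr rfl fun i _ => hVB i]
  -- the entrywise comparison
  have hNnn : ∀ (i j : κS), 0 ≤ ∑' k : ℕ, (A ^ k) i j := fun i j =>
    tsum_nonneg fun k => myPow_entry_nonneg hAnn k i j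
  have hcomp : ∀ i j : κS', (∑' k : ℕ, (B ^ k) i j) ≤ ∑' k : ℕ, (A ^ k) (f i) (f j) := by
    intro i j
    refine Summable.tsum_le_tsum (fun k => ?_) (hsumB i j) (hsumA (f i) (f j))
    rw [hBA]
    exact mySubmatrix_pow_le hAnn hfi k i j
  calc ∑ i : κS', ∑ j : κS', ∑' k : ℕ, (B ^ k) i j
      ≤ ∑ i : κS', ∑ j : κS', ∑' k : ℕ, (A ^ k) (f i) (f j) :=
        Finset.sum_le_sum fun i _ => Finset.sum_le_sum fun j _ => hcomp i j
    _ ≤ ∑ i : κS', ∑ j : κS, ∑' k : ℕ, (A ^ k) (f i) j :=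
        Finset.sum_le_sum fun i _ =>
          mySum_comp_le (g := fun j => ∑' k : ℕ, (A ^ k) (f i) j) (fun j => hNnn _ j) hfi
    _ ≤ ∑ i : κS, ∑ j : κS, ∑' k : ℕ, (A ^ k) i j :=
        mySum_comp_le (g := fun i => ∑ j : κS, ∑' k : ℕ, (A ^ k) i j)
          (fun i => Finset.sum_nonneg fun j _ => hNnn i j) hfi

end mainproof
end

section
/- Group comparison of intercentralities: assume θ = 1, |S| = |S'|, b_S(G,1) ≤ b_{S'}(G,1) entrywise (under a fixed bijection between S and S'), and M_{SS}(G) ≥ M_{S'S'}(G) entrywise, with G nonnegative symmetric and 0 ≤ δ < 1/λ_max(G). Then d_S(G,1) ≤ d_{S'}(G,1). -/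
open Matrix

section Helpers

variable {m : Type*} [Fintype m] [DecidableEq m]

lemma star_real_vec (x : m → ℝ) : star x = x := by
  funext i; simp

lemma quad_eq {B : Matrix m m ℝ} (hB : B.IsHermitian) (x : m → ℝ) :
    x ⬝ᵥ (B *ᵥ x)
      = ∑ i, hB.eigenvalues i * ((star (hB.eigenvectorUnitary : Matrix m m ℝ) *ᵥ x) i)^2 := by
  set U := (hB.eigenvectorUnitary : Matrix m m ℝ) with hUdef
  set y := star U *ᵥ x with hy
  have hspec := hB.spectral_theorem
  have hD : (RCLike.ofReal ∘ hB.eigenvalues : m → ℝ) = hB.eigenvalues := by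
    funext i; simp
  calc x ⬝ᵥ (B *ᵥ x)
      = x ⬝ᵥ ((U * diagonal hB.eigenvalues * star U) *ᵥ x) := by
        rw [← hD]; conv_lhs => rw [hspec, Unitary.conjStarAlgAut_apply]
    _ = x ⬝ᵥ (U *ᵥ (diagonal hB.eigenvalues *ᵥ y)) := by
        rw [hy, mulVec_mulVec, mulVec_mulVec, Matrix.mul_assoc]
    _ = (x ᵥ* U) ⬝ᵥ (diagonal hB.eigenvalues *ᵥ y) := by
        rw [dotProduct_mulVec]
    _ = y ⬝ᵥ (diagonal hB.eigenvalues *ᵥ y) := by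
        congr 1
        rw [hy, Matrix.star_eq_conjTranspose, conjTranspose_eq_transpose_of_trivial,
          mulVec_transpose]
    _ = ∑ i, hB.eigenvalues i * (y i)^2 := by
        simp only [dotProduct, mulVec_diagonal]
        exact Finset.sum_congr rfl fun i _ => by ring

lemma quad_norm_eq {B : Matrix m m ℝ} (hB : B.IsHermitian) (x : m → ℝ) :
    (star (hB.eigenvectorUnitary : Matrix m m ℝ) *ᵥ x) ⬝ᵥ
      (star (hB.eigenvectorUnitary : Matrix m m ℝ) *ᵥ x) = x ⬝ᵥ x := by
  set U := (hB.eigenvectorUnitary : Matrix m m ℝ) with hUdef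
  set y := star U *ᵥ x with hy
  have hUU : U * star U = 1 := Matrix.mem_unitaryGroup_iff.mp hB.eigenvectorUnitary.2
  have hx : U *ᵥ y = x := by
    rw [hy, mulVec_mulVec, hUU, one_mulVec]
  calc y ⬝ᵥ y = (y ᵥ* star U) ⬝ᵥ x := by rw [← dotProduct_mulVec, ← hy]
    _ = (U *ᵥ y) ⬝ᵥ x := by
        congr 1
        rw [Matrix.star_eq_conjTranspose, conjTranspose_eq_transpose_of_trivial,
          ← mulVec_transpose, transpose_transpose]
    _ = x ⬝ᵥ x := by rw [hx]

lemma quad_strict {B : Matrix m m ℝ} (hB : B.IsHermitian) {δ : ℝ} (hδ : 0 ≤ δ)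
    (hev : ∀ i, δ * |hB.eigenvalues i| < 1) {x : m → ℝ} (hx : x ≠ 0) :
    δ * |x ⬝ᵥ (B *ᵥ x)| < x ⬝ᵥ x := by
  set U := (hB.eigenvectorUnitary : Matrix m m ℝ) with hUdef
  set y := star U *ᵥ x with hy
  have hUU : U * star U = 1 := Matrix.mem_unitaryGroup_iff.mp hB.eigenvectorUnitary.2
  have hxy : U *ᵥ y = x := by rw [hy, mulVec_mulVec, hUU, one_mulVec]
  have hyne : y ≠ 0 := by
    intro h
    apply hx
    rw [← hxy, h, mulVec_zero]
  obtain ⟨i0, hi0⟩ : ∃ i, y i ≠ 0 := by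
    by_contra h
    push_neg at h
    exact hyne (funext h)
  have key : δ * |x ⬝ᵥ (B *ᵥ x)| ≤ ∑ i, (δ * |hB.eigenvalues i|) * (y i)^2 := by
    rw [quad_eq hB x, ← hy]
    calc δ * |∑ i, hB.eigenvalues i * (y i)^2|
        ≤ δ * ∑ i, |hB.eigenvalues i * (y i)^2| :=
          mul_le_mul_of_nonneg_left (Finset.abs_sum_le_sum_abs _ _) hδ
      _ = ∑ i, (δ * |hB.eigenvalues i|) * (y i)^2 := by
          rw [Finset.mul_sum]
          refine Finset.sum_congr rfl fun i _ => ?_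
          rw [abs_mul, abs_of_nonneg (sq_nonneg (y i))]
          ring
  have hlt : ∑ i, (δ * |hB.eigenvalues i|) * (y i)^2 < ∑ i, (y i)^2 := by
    apply Finset.sum_lt_sum
    · intro i _
      calc (δ * |hB.eigenvalues i|) * (y i)^2 ≤ 1 * (y i)^2 :=
            mul_le_mul_of_nonneg_right (le_of_lt (hev i)) (sq_nonneg _)
        _ = (y i)^2 := one_mul _
    · refine ⟨i0, Finset.mem_univ _, ?_⟩
      have h2 : (0:ℝ) < (y i0)^2 := by positivity
      calc (δ * |hB.eigenvalues i0|) * (y i0)^2 < 1 * (y i0)^2 :=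
            mul_lt_mul_of_pos_right (hev i0) h2
        _ = (y i0)^2 := one_mul _
  have hyy : ∑ i, (y i)^2 = x ⬝ᵥ x := by
    rw [← quad_norm_eq hB x, ← hy]
    simp [dotProduct, pow_two]
  linarith [key, hlt]

lemma herm_smul {G : Matrix m m ℝ} (hG : G.IsHermitian) (δ : ℝ) : (δ • G).IsHermitian := by
  unfold Matrix.IsHermitian
  rw [conjTranspose_smul, hG.eq]
  simp

lemma posDef_one_sub_smul {G : Matrix m m ℝ} (hG : G.IsHermitian) {δ : ℝ} (hδ : 0 ≤ δ)
    (hq : ∀ x : m → ℝ, x ≠ 0 → δ * |x ⬝ᵥ (G *ᵥ x)| < x ⬝ᵥ x) :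
    (1 - δ • G).PosDef ∧ (1 + δ • G).PosDef := by
  have hHs : (δ • G).IsHermitian := herm_smul hG δ
  have hkey : ∀ x : m → ℝ, x ≠ 0 →
      star x ⬝ᵥ ((1 - δ • G) *ᵥ x) = x ⬝ᵥ x - δ * (x ⬝ᵥ (G *ᵥ x)) ∧
      star x ⬝ᵥ ((1 + δ • G) *ᵥ x) = x ⬝ᵥ x + δ * (x ⬝ᵥ (G *ᵥ x)) := by
    intro x _
    rw [star_real_vec, sub_mulVec, add_mulVec, one_mulVec, dotProduct_sub, dotProduct_add,
      smul_mulVec, dotProduct_smul]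
    constructor <;> ring_nf <;> simp [smul_eq_mul]
  constructor
  · refine Matrix.PosDef.of_dotProduct_mulVec_pos (isHermitian_one.sub hHs) fun x hx => ?_
    rw [(hkey x hx).1]
    have h1 := hq x hx
    have h2 : δ * (x ⬝ᵥ (G *ᵥ x)) ≤ δ * |x ⬝ᵥ (G *ᵥ x)| :=
      mul_le_mul_of_nonneg_left (le_abs_self _) hδ
    linarith
  · refine Matrix.PosDef.of_dotProduct_mulVec_pos (isHermitian_one.add hHs) fun x hx => ?_
    rw [(hkey x hx).2]
    have h1 := hq x hx
    have h2 : δ * (-|x ⬝ᵥ (G *ᵥ x)|) ≤ δ * (x ⬝ᵥ (G *ᵥ x)) :=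
      mul_le_mul_of_nonneg_left (neg_abs_le _) hδ
    have h3 : δ * (-|x ⬝ᵥ (G *ᵥ x)|) = -(δ * |x ⬝ᵥ (G *ᵥ x)|) := by ring
    linarith

lemma eigenvalues_abs_lt {B : Matrix m m ℝ} (hB : B.IsHermitian)
    (h1 : (1 - B).PosDef) (h2 : (1 + B).PosDef) (i : m) : |hB.eigenvalues i| < 1 := by
  set u : m → ℝ := ⇑(hB.eigenvectorBasis i) with hu
  have hune : u ≠ 0 := by
    intro h
    apply hB.eigenvectorBasis.orthonormal.ne_zero i
    ext j
    exact congrFun h j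
  have huu : 0 < u ⬝ᵥ u := by
    have := dotProduct_self_star_pos_iff (v := u)
    rw [star_real_vec] at this
    exact this.mpr hune
  have hBu : B *ᵥ u = hB.eigenvalues i • u := hB.mulVec_eigenvectorBasis i
  have e1 : star u ⬝ᵥ ((1 - B) *ᵥ u) = (1 - hB.eigenvalues i) * (u ⬝ᵥ u) := by
    rw [star_real_vec, sub_mulVec, one_mulVec, dotProduct_sub, hBu, dotProduct_smul]
    simp [smul_eq_mul]; ring
  have e2 : star u ⬝ᵥ ((1 + B) *ᵥ u) = (1 + hB.eigenvalues i) * (u ⬝ᵥ u) := by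
    rw [star_real_vec, add_mulVec, one_mulVec, dotProduct_add, hBu, dotProduct_smul]
    simp [smul_eq_mul]; ring
  have p1 := h1.dotProduct_mulVec_pos hune
  have p2 := h2.dotProduct_mulVec_pos hune
  rw [e1] at p1
  rw [e2] at p2
  have q1 : 0 < 1 - hB.eigenvalues i := mul_pos_iff.mp p1 |>.elim
    (fun h => h.1) (fun h => absurd huu (not_lt.mpr (le_of_lt h.2)))
  have q2 : 0 < 1 + hB.eigenvalues i := mul_pos_iff.mp p2 |>.elim
    (fun h => h.1) (fun h => absurd huu (not_lt.mpr (le_of_lt h.2)))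
  rw [abs_lt]
  constructor <;> linarith

lemma pow_entries_nonneg {B : Matrix m m ℝ} (hB : ∀ i j, 0 ≤ B i j) (k : ℕ) :
    ∀ i j, 0 ≤ (B ^ k) i j := by
  induction k with
  | zero => intro i j; simp [Matrix.one_apply]; positivity
  | succ k ih =>
      intro i j
      rw [pow_succ, Matrix.mul_apply]
      exact Finset.sum_nonneg fun l _ => mul_nonneg (ih i l) (hB l j)

lemma pow_mulVec_one_tendsto {B : Matrix m m ℝ} (hB : B.IsHermitian)
    (hev : ∀ i, |hB.eigenvalues i| < 1) (i : m) :
    Filter.Tendsto (fun k => (B ^ k *ᵥ (fun _ => (1:ℝ))) i) Filter.atTop (nhds 0) := by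
  set c : m → ℝ := fun j => hB.eigenvectorBasis.repr (WithLp.toLp 2 (fun _ => 1 : m → ℝ)) j
    with hc
  have expand : ∀ k, B ^ k *ᵥ (fun _ => (1:ℝ))
      = ∑ j, (c j * hB.eigenvalues j ^ k) • ⇑(hB.eigenvectorBasis j) := by
    intro k
    induction k with
    | zero =>
        simp only [pow_zero, Matrix.one_mulVec, mul_one]
        have := hB.eigenvectorBasis.sum_repr (WithLp.toLp 2 (fun _ => 1 : m → ℝ))
        funext i'
        have h2 := congrFun (congrArg (fun (v : EuclideanSpace ℝ m) => (v : m → ℝ)) this) i'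
        simp only at h2
        rw [← h2]
        rw [Finset.sum_apply]
        simp [hc]
    | succ k ih =>
        rw [pow_succ', ← Matrix.mulVec_mulVec, ih]
        rw [show B *ᵥ (∑ j, (c j * hB.eigenvalues j ^ k) • ⇑(hB.eigenvectorBasis j))
            = ∑ j, B *ᵥ ((c j * hB.eigenvalues j ^ k) • ⇑(hB.eigenvectorBasis j)) from by
          exact map_sum B.mulVecLin (fun j => (c j * hB.eigenvalues j ^ k) • ⇑(hB.eigenvectorBasis j))
              Finset.univ]
        refine Finset.sum_congr rfl fun j _ => ?_
        rw [Matrix.mulVec_smul, hB.mulVec_eigenvectorBasis, smul_smul]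
        congr 1
        ring
  have : ∀ k, (B ^ k *ᵥ (fun _ => (1:ℝ))) i
      = ∑ j, c j * hB.eigenvectorBasis j i * hB.eigenvalues j ^ k := by
    intro k
    rw [expand k, Finset.sum_apply]
    refine Finset.sum_congr rfl fun j _ => ?_
    simp [smul_eq_mul]
    ring
  simp only [this]
  have h0 : (0:ℝ) = ∑ _j : m, 0 := by simp
  rw [h0]
  apply tendsto_finset_sum
  intro j _
  have := tendsto_pow_atTop_nhds_zero_of_abs_lt_one (hev j)
  simpa using this.const_mul (c j * hB.eigenvectorBasis j i)

lemma neumann_nonneg {B : Matrix m m ℝ} (hB : B.IsHermitian) (hnn : ∀ i j, 0 ≤ B i j)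
    (hev : ∀ i, |hB.eigenvalues i| < 1) (hP : (1 - B).PosDef) (i : m) :
    0 ≤ ((1 - B)⁻¹ *ᵥ (fun _ => (1:ℝ))) i := by
  set P := 1 - B with hPdef
  have hdet : IsUnit P.det := isUnit_iff_ne_zero.mpr (ne_of_gt hP.det_pos)
  have hinv : P⁻¹ * P = 1 := Matrix.nonsing_inv_mul P hdet
  set w := P⁻¹ *ᵥ (fun _ => (1:ℝ)) with hw
  set s : ℕ → m → ℝ := fun k => (∑ l ∈ Finset.range k, B ^ l) *ᵥ (fun _ => (1:ℝ)) with hs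
  have hsnn : ∀ k j, 0 ≤ s k j := by
    intro k j
    rw [hs]
    simp only [Matrix.mulVec, dotProduct]
    refine Finset.sum_nonneg fun l _ => ?_
    rw [mul_one]
    rw [Matrix.sum_apply]
    exact Finset.sum_nonneg fun k' _ => pow_entries_nonneg hnn k' j l
  have hgeom : ∀ k, P * (∑ l ∈ Finset.range k, B ^ l) = 1 - B ^ k := fun k =>
    mul_neg_geom_sum B k
  have hserr : ∀ k, s k = fun j => w j - (P⁻¹ *ᵥ (B ^ k *ᵥ (fun _ => (1:ℝ)))) j := by
    intro k
    have h1 : P⁻¹ *ᵥ (P *ᵥ s k) = s k := by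
      rw [Matrix.mulVec_mulVec, hinv, Matrix.one_mulVec]
    have h2 : P *ᵥ s k = (fun _ => (1:ℝ)) - B ^ k *ᵥ (fun _ => (1:ℝ)) := by
      rw [hs]
      rw [Matrix.mulVec_mulVec, hgeom k, Matrix.sub_mulVec, Matrix.one_mulVec]
    rw [← h1, h2, Matrix.mulVec_sub]
    funext j
    simp [hw]
  have herr : Filter.Tendsto (fun k => (P⁻¹ *ᵥ (B ^ k *ᵥ (fun _ => (1:ℝ)))) i)
      Filter.atTop (nhds 0) := by
    have : ∀ k, (P⁻¹ *ᵥ (B ^ k *ᵥ (fun _ => (1:ℝ)))) i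
        = ∑ j, P⁻¹ i j * (B ^ k *ᵥ (fun _ => (1:ℝ))) j := by
      intro k; rfl
    simp only [this]
    have h0 : (0:ℝ) = ∑ _j : m, 0 := by simp
    rw [h0]
    apply tendsto_finset_sum
    intro j _
    simpa using (pow_mulVec_one_tendsto hB hev j).const_mul (P⁻¹ i j)
  have hlim : Filter.Tendsto (fun k => s k i) Filter.atTop (nhds (w i)) := by
    have : (fun k => s k i) = fun k => w i - (P⁻¹ *ᵥ (B ^ k *ᵥ (fun _ => (1:ℝ)))) i := by
      funext k
      rw [hserr k]
    rw [this]
    simpa using (tendsto_const_nhds (x := w i)).sub herr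
  exact ge_of_tendsto' hlim fun k => hsnn k i

end Helpers

lemma sum_extend {n : ℕ} (S : Finset (Fin n)) (g : Fin n → ℝ) (x : {x // x ∈ S} → ℝ) :
    ∑ j : Fin n, (fun j => if h : j ∈ S then x ⟨j, h⟩ else 0) j * g j
      = ∑ j : {x // x ∈ S}, x j * g j.val := by
  rw [← Finset.sum_subset (Finset.subset_univ S) (by
    intro j _ hj
    simp [dif_neg hj])]
  rw [← Finset.sum_coe_sort S (fun j => (if h : j ∈ S then x ⟨j, h⟩ else 0) * g j)]
  refine Finset.sum_congr rfl fun j _ => ?_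
  rw [dif_pos j.2]

lemma blk_posDef {n : ℕ} {A : Matrix (Fin n) (Fin n) ℝ} (hA : A.PosDef) (S : Finset (Fin n)) :
    (blk A S S).PosDef := by
  refine Matrix.PosDef.of_dotProduct_mulVec_pos (hA.1.submatrix _) fun x hx => ?_
  set xt : Fin n → ℝ := fun j => if h : j ∈ S then x ⟨j, h⟩ else 0 with hxt
  have hxtne : xt ≠ 0 := by
    intro h
    apply hx
    funext i
    have := congrFun h i.val
    rw [hxt] at this
    simpa [dif_pos i.2] using this
  have key := hA.dotProduct_mulVec_pos hxtne
  rw [star_real_vec] at key ⊢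
  have hmv : ∀ jv : Fin n, (A *ᵥ xt) jv = ∑ k : {x // x ∈ S}, x k * A jv k.val := by
    intro jv
    show ∑ k, A jv k * xt k = _
    rw [show ∑ k, A jv k * xt k = ∑ k : Fin n, xt k * A jv k from
      Finset.sum_congr rfl fun k _ => mul_comm _ _]
    exact sum_extend S (fun k => A jv k) x
  have hdp : xt ⬝ᵥ (A *ᵥ xt) = ∑ j : {x // x ∈ S}, x j * (A *ᵥ xt) j.val := by
    exact sum_extend S (fun j => (A *ᵥ xt) j) x
  rw [hdp] at key
  have : x ⬝ᵥ (blk A S S *ᵥ x) = ∑ j : {x // x ∈ S}, x j * (A *ᵥ xt) j.val := by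
    refine Finset.sum_congr rfl fun j _ => ?_
    rw [hmv j.val]
    congr 1
    simp only [Matrix.mulVec, dotProduct, blk, submatrix_apply]
    exact Finset.sum_congr rfl fun k _ => mul_comm _ _
  rw [this]
  exact key

lemma blk_one_sub {n : ℕ} (G : Matrix (Fin n) (Fin n) ℝ) (δ : ℝ) (S : Finset (Fin n)) :
    blk (1 - δ • G) S S = 1 - δ • blk G S S := by
  ext i j
  simp only [blk, submatrix_apply, Matrix.sub_apply, Matrix.smul_apply, Matrix.one_apply,
    smul_eq_mul]
  congr 1
  by_cases h : i = j
  · subst h; simp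
  · rw [if_neg h, if_neg (fun hv => h (Subtype.ext hv))]

lemma blk_one_add {n : ℕ} (G : Matrix (Fin n) (Fin n) ℝ) (δ : ℝ) (S : Finset (Fin n)) :
    blk (1 + δ • G) S S = 1 + δ • blk G S S := by
  ext i j
  simp only [blk, submatrix_apply, Matrix.add_apply, Matrix.smul_apply, Matrix.one_apply,
    smul_eq_mul]
  congr 1
  by_cases h : i = j
  · subst h; simp
  · rw [if_neg h, if_neg (fun hv => h (Subtype.ext hv))]

theorem intercentrality_comparison {n : ℕ} (G : Matrix (Fin n) (Fin n) ℝ) (δ : ℝ)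
    (hsym : G.IsSymm) (hnn : ∀ i j, 0 ≤ G i j) (hδ : 0 ≤ δ)
    (hlt : ENNReal.ofReal δ * spectralRadius ℝ G < 1)
    (S S' : Finset (Fin n)) (hcard : S.card = S'.card)
    (e : {x // x ∈ S} ≃ {x // x ∈ S'})
    (hb : ∀ i : {x // x ∈ S},
      ((1 - δ • G)⁻¹ *ᵥ fun _ => (1 : ℝ)) i.val
        ≤ ((1 - δ • G)⁻¹ *ᵥ fun _ => (1 : ℝ)) (e i).val)
    (hM : ∀ i j : {x // x ∈ S},
      ((1 - δ • G)⁻¹) (e i).val (e j).val ≤ ((1 - δ • G)⁻¹) i.val j.val) :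
    restr ((1 - δ • G)⁻¹ *ᵥ fun _ => 1) S ⬝ᵥ
        ((blk ((1 - δ • G)⁻¹) S S)⁻¹ *ᵥ restr ((1 - δ • G)⁻¹ *ᵥ fun _ => 1) S)
      ≤ restr ((1 - δ • G)⁻¹ *ᵥ fun _ => 1) S' ⬝ᵥ
          ((blk ((1 - δ • G)⁻¹) S' S')⁻¹ *ᵥ restr ((1 - δ • G)⁻¹ *ᵥ fun _ => 1) S') := by
  have hG : G.IsHermitian := by
    rw [Matrix.IsHermitian, conjTranspose_eq_transpose_of_trivial]
    exact hsym
  -- eigenvalue bound from the spectral radius hypothesis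
  have hev : ∀ i, δ * |hG.eigenvalues i| < 1 := by
    intro i
    have hmem := hG.eigenvalues_mem_spectrum_real i
    have hle : (‖hG.eigenvalues i‖₊ : ENNReal) ≤ spectralRadius ℝ G :=
      le_iSup₂ (f := fun k (_ : k ∈ spectrum ℝ G) => (‖k‖₊ : ENNReal)) _ hmem
    have h2 : ENNReal.ofReal δ * (‖hG.eigenvalues i‖₊ : ENNReal) < 1 :=
      lt_of_le_of_lt (mul_le_mul_right hle _) hlt
    have h3 : (‖hG.eigenvalues i‖₊ : ENNReal) = ENNReal.ofReal |hG.eigenvalues i| :=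
      Real.enorm_eq_ofReal_abs _
    rw [h3, ← ENNReal.ofReal_mul hδ] at h2
    have := ENNReal.ofReal_lt_one.mp h2
    exact this
  have hq := fun x hx => quad_strict hG hδ hev (x := x) hx
  obtain ⟨hPD1, hPD2⟩ := posDef_one_sub_smul hG hδ hq
  have hMpd : ((1 - δ • G)⁻¹).PosDef := hPD1.inv
  set M : Matrix (Fin n) (Fin n) ℝ := (1 - δ • G)⁻¹ with hMdef
  set b : Fin n → ℝ := M *ᵥ (fun _ => (1:ℝ)) with hbdef
  set C : Finset (Fin n) := Sᶜ with hC
  -- the complement block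
  set H : Matrix {x // x ∈ C} {x // x ∈ C} ℝ := blk G C C with hH
  have hHh : H.IsHermitian := hG.submatrix _
  have hB0h : (δ • H).IsHermitian := herm_smul hHh δ
  have h1C : (1 - δ • H).PosDef := by
    rw [← blk_one_sub]
    exact blk_posDef hPD1 C
  have h2C : (1 + δ • H).PosDef := by
    rw [← blk_one_add]
    exact blk_posDef hPD2 C
  have hevC : ∀ i, |hB0h.eigenvalues i| < 1 := eigenvalues_abs_lt hB0h h1C h2C
  have hnnC : ∀ i j, 0 ≤ (δ • H) i j := by
    intro i j
    simp only [Matrix.smul_apply, smul_eq_mul, hH, blk, submatrix_apply]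
    exact mul_nonneg hδ (hnn _ _)
  set w : {x // x ∈ C} → ℝ := (1 - δ • H)⁻¹ *ᵥ (fun _ => (1:ℝ)) with hwdef
  have hw0 : ∀ i, 0 ≤ w i := neumann_nonneg hB0h hnnC hevC h1C
  have hCdet : IsUnit (1 - δ • H).det := isUnit_iff_ne_zero.mpr (ne_of_gt h1C.det_pos)
  have hCw : (1 - δ • H) *ᵥ w = fun _ => (1:ℝ) := by
    rw [hwdef, Matrix.mulVec_mulVec, Matrix.mul_nonsing_inv _ hCdet, Matrix.one_mulVec]
  -- construct the auxiliary vectors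
  set y : Fin n → ℝ := fun j => if h : j ∈ C then -(w ⟨j, h⟩) else 0 with hy
  set x : Fin n → ℝ := fun j => 1 + ((1 - δ • G) *ᵥ y) j with hx
  have hAy : ∀ j : Fin n, ((1 - δ • G) *ᵥ y) j
      = ∑ k : {x // x ∈ C}, (-(w k)) * (1 - δ • G) j k.val := by
    intro j
    show ∑ k, (1 - δ • G) j k * y k = _
    rw [show ∑ k, (1 - δ • G) j k * y k = ∑ k : Fin n, y k * (1 - δ • G) j k from
      Finset.sum_congr rfl fun k _ => mul_comm _ _]
    exact sum_extend C (fun k => (1 - δ • G) j k) (fun k => -(w k))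
  have hxC : ∀ j (hj : j ∈ C), x j = 0 := by
    intro j hj
    have h1 : ((1 - δ • G) *ᵥ y) j = -((1 - δ • H) *ᵥ w) ⟨j, hj⟩ := by
      rw [hAy j, ← blk_one_sub]
      show _ = -∑ k, (blk (1 - δ • G) C C) ⟨j, hj⟩ k * w k
      rw [← Finset.sum_neg_distrib]
      refine Finset.sum_congr rfl fun k _ => ?_
      simp only [blk, submatrix_apply]
      ring
    rw [hx]
    simp only [h1, hCw]
    ring
  have hxS : ∀ j, j ∉ C → 0 ≤ x j := by
    intro j hj
    rw [hx]
    simp only [hAy j]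
    have : ∀ k : {x // x ∈ C}, 0 ≤ (-(w k)) * (1 - δ • G) j k.val := by
      intro k
      have hne : j ≠ k.val := by
        intro h
        exact hj (h ▸ k.2)
      have hentry : (1 - δ • G) j k.val = -(δ * G j k.val) := by
        simp [Matrix.sub_apply, Matrix.one_apply, hne]
      rw [hentry]
      have := mul_nonneg (mul_nonneg hδ (hnn j k.val)) (hw0 k)
      nlinarith [hw0 k, mul_nonneg hδ (hnn j k.val)]
    have hsum : 0 ≤ ∑ k : {x // x ∈ C}, (-(w k)) * (1 - δ • G) j k.val :=
      Finset.sum_nonneg fun k _ => this k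
    linarith
  -- x agrees with the dite-extension of its restriction to S
  set v : {x // x ∈ S} → ℝ := restr x S with hv
  have hv0 : ∀ i, 0 ≤ v i := by
    intro i
    apply hxS i.val
    simp [hC, i.2]
  have hxext : x = fun j => if h : j ∈ S then v ⟨j, h⟩ else 0 := by
    funext j
    by_cases h : j ∈ S
    · rw [dif_pos h]; rfl
    · rw [dif_neg h]
      exact hxC j (by simp [hC, h])
  -- M *ᵥ x = b + y
  have hAdet : IsUnit (1 - δ • G).det := isUnit_iff_ne_zero.mpr (ne_of_gt hPD1.det_pos)
  have hMx : M *ᵥ x = fun j => b j + y j := by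
    have hx' : x = (fun _ => (1:ℝ)) + (1 - δ • G) *ᵥ y := by
      funext j; rw [hx]; rfl
    rw [hx', Matrix.mulVec_add, Matrix.mulVec_mulVec, hMdef,
      Matrix.nonsing_inv_mul _ hAdet, Matrix.one_mulVec]
    rfl
  -- the block equation
  have hBv : blk M S S *ᵥ v = restr b S := by
    funext i
    have h1 : (M *ᵥ x) i.val = ∑ k : {x // x ∈ S}, v k * M i.val k.val := by
      show ∑ k, M i.val k * x k = _
      rw [show ∑ k, M i.val k * x k = ∑ k : Fin n, x k * M i.val k from
        Finset.sum_congr rfl fun k _ => mul_comm _ _]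
      conv_lhs => rw [hxext]
      exact sum_extend S (fun k => M i.val k) v
    have h2 : (M *ᵥ x) i.val = b i.val := by
      rw [hMx]
      have : y i.val = 0 := by
        rw [hy]
        have : i.val ∉ C := by simp [hC, i.2]
        simp [dif_neg this]
      simp [this]
    show ∑ k, blk M S S i k * v k = b i.val
    rw [← h2, h1]
    exact Finset.sum_congr rfl fun k _ => by
      simp only [blk, submatrix_apply]; ring
  have hBSpd : (blk M S S).PosDef := blk_posDef hMpd S
  have hBS'pd : (blk M S' S').PosDef := blk_posDef hMpd S'
  have hBSdet : IsUnit (blk M S S).det := isUnit_iff_ne_zero.mpr (ne_of_gt hBSpd.det_pos)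
  have hBS'det : IsUnit (blk M S' S').det := isUnit_iff_ne_zero.mpr (ne_of_gt hBS'pd.det_pos)
  have hvinv : (blk M S S)⁻¹ *ᵥ restr b S = v := by
    rw [← hBv, Matrix.mulVec_mulVec, Matrix.nonsing_inv_mul _ hBSdet, Matrix.one_mulVec]
  -- final comparison
  set bS : {x // x ∈ S} → ℝ := restr b S with hbS
  set bS' : {x // x ∈ S'} → ℝ := restr b S' with hbS'
  set u : {x // x ∈ S'} → ℝ := (blk M S' S')⁻¹ *ᵥ bS' with hu
  set v' : {x // x ∈ S'} → ℝ := fun i => v (e.symm i) with hv'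
  have hBu : blk M S' S' *ᵥ u = bS' := by
    rw [hu, Matrix.mulVec_mulVec, Matrix.mul_nonsing_inv _ hBS'det, Matrix.one_mulVec]
  have hsymm' : (blk M S' S')ᵀ = blk M S' S' := by
    have := hBS'pd.1
    rwa [Matrix.IsHermitian, conjTranspose_eq_transpose_of_trivial] at this
  -- quadratic inequality: bS' ⬝ᵥ u ≥ 2 bS' ⬝ᵥ v' - v' ⬝ᵥ (B' v')
  have hquad : 2 * (bS' ⬝ᵥ v') - v' ⬝ᵥ (blk M S' S' *ᵥ v') ≤ bS' ⬝ᵥ u := by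
    have hps := hBS'pd.posSemidef.dotProduct_mulVec_nonneg (u - v')
    rw [star_real_vec] at hps
    have hexp : (u - v') ⬝ᵥ (blk M S' S' *ᵥ (u - v'))
        = bS' ⬝ᵥ u - 2 * (bS' ⬝ᵥ v') + v' ⬝ᵥ (blk M S' S' *ᵥ v') := by
      rw [Matrix.mulVec_sub, dotProduct_sub, sub_dotProduct, sub_dotProduct, hBu]
      have e1 : u ⬝ᵥ (blk M S' S' *ᵥ v') = bS' ⬝ᵥ v' := by
        rw [dotProduct_mulVec, ← Matrix.mulVec_transpose, hsymm', hBu]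
      have e2 : v' ⬝ᵥ bS' = bS' ⬝ᵥ v' := dotProduct_comm _ _
      have e3 : u ⬝ᵥ bS' = bS' ⬝ᵥ u := dotProduct_comm _ _
      rw [e1, e2, e3]
      ring
    linarith
  -- comparison of linear terms
  have hlin : bS ⬝ᵥ v ≤ bS' ⬝ᵥ v' := by
    have hre : bS' ⬝ᵥ v' = ∑ i : {x // x ∈ S}, b (e i).val * v i := by
      rw [dotProduct]
      exact (Fintype.sum_equiv e (fun i : {x // x ∈ S} => b (e i).val * v i)
        (fun i' => bS' i' * v' i') (fun i => by simp [hbS', hv', restr])).symm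
    rw [hre, dotProduct]
    refine Finset.sum_le_sum fun i _ => ?_
    exact mul_le_mul_of_nonneg_right (hb i) (hv0 i)
  -- comparison of quadratic terms
  have hquad2 : v' ⬝ᵥ (blk M S' S' *ᵥ v') ≤ v ⬝ᵥ (blk M S S *ᵥ v) := by
    have hre : v' ⬝ᵥ (blk M S' S' *ᵥ v')
        = ∑ i : {x // x ∈ S}, v i * ∑ j : {x // x ∈ S}, M (e i).val (e j).val * v j := by
      rw [dotProduct]
      refine (Fintype.sum_equiv e
        (fun i : {x // x ∈ S} => v i * ∑ j : {x // x ∈ S}, M (e i).val (e j).val * v j)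
        (fun i' => v' i' * (blk M S' S' *ᵥ v') i') (fun i => ?_)).symm
      have hvi : v' (e i) = v i := by simp [hv']
      have hinner : (blk M S' S' *ᵥ v') (e i)
          = ∑ j : {x // x ∈ S}, M (e i).val (e j).val * v j := by
        show ∑ j' : {x // x ∈ S'}, blk M S' S' (e i) j' * v' j' = _
        exact (Fintype.sum_equiv e
          (fun j : {x // x ∈ S} => M (e i).val (e j).val * v j)
          (fun j' => blk M S' S' (e i) j' * v' j')
          (fun j => by simp [blk, submatrix_apply, hv'])).symm
      show v i * _ = v' (e i) * (blk M S' S' *ᵥ v') (e i)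
      rw [hvi, hinner]
    have hre2 : v ⬝ᵥ (blk M S S *ᵥ v)
        = ∑ i : {x // x ∈ S}, v i * ∑ j : {x // x ∈ S}, M i.val j.val * v j := by
      rw [dotProduct]
      refine Finset.sum_congr rfl fun i _ => ?_
      rfl
    rw [hre, hre2]
    refine Finset.sum_le_sum fun i _ => ?_
    refine mul_le_mul_of_nonneg_left ?_ (hv0 i)
    refine Finset.sum_le_sum fun j _ => ?_
    exact mul_le_mul_of_nonneg_right (hM i j) (hv0 j)
  have hfin : v ⬝ᵥ (blk M S S *ᵥ v) = bS ⬝ᵥ v := by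
    rw [hBv, dotProduct_comm]
  rw [hvinv]
  calc bS ⬝ᵥ v = 2 * (bS ⬝ᵥ v) - (bS ⬝ᵥ v) := by ring
    _ ≤ 2 * (bS' ⬝ᵥ v') - v' ⬝ᵥ (blk M S' S' *ᵥ v') := by
        rw [hfin] at hquad2
        linarith [hlin, hquad2]
    _ ≤ bS' ⬝ᵥ u := hquad
end

section
/- The vector v := (M_{SS}(G))^{-1} b_S(G,1) satisfies v = δ G_{SS^C}(I - δG_{S^C S^C})^{-1} 1 + 1, and in particular v is entrywise nonnegative when G is nonnegative and 0 ≤ δ < 1/λ_max(G). -/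
open Matrix

namespace VAux

variable {n : ℕ}

/-- extension of a vector on `S` by zero -/
def ext (S : Finset (Fin n)) (x : {i // i ∈ S} → ℝ) : Fin n → ℝ :=
  fun j => if h : j ∈ S then x ⟨j, h⟩ else 0

lemma sum_split (S : Finset (Fin n)) (g : Fin n → ℝ) :
    ∑ j, g j = (∑ i : {x // x ∈ S}, g i.val) + ∑ i : {x // x ∈ Sᶜ}, g i.val := by
  rw [Finset.sum_coe_sort, Finset.sum_coe_sort, Finset.sum_add_sum_compl]

lemma blk_mul (S T U : Finset (Fin n)) (A B : Matrix (Fin n) (Fin n) ℝ) :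
    blk (A * B) T U = blk A T S * blk B S U + blk A T Sᶜ * blk B Sᶜ U := by
  ext i j
  simp only [blk, Matrix.add_apply, Matrix.mul_apply, Matrix.submatrix_apply]
  exact sum_split S _

lemma restr_mulVec (S T : Finset (Fin n)) (A : Matrix (Fin n) (Fin n) ℝ) (v : Fin n → ℝ) :
    restr (A *ᵥ v) T = blk A T S *ᵥ restr v S + blk A T Sᶜ *ᵥ restr v Sᶜ := by
  ext i
  simp only [restr, blk, Matrix.mulVec, Pi.add_apply, dotProduct, Matrix.submatrix_apply]
  exact sum_split S _

lemma blk_one_same (S : Finset (Fin n)) : blk (1 : Matrix (Fin n) (Fin n) ℝ) S S = 1 := by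
  ext i j
  simp only [blk, Matrix.submatrix_apply, Matrix.one_apply, Subtype.val_inj]

lemma blk_one_disj (S : Finset (Fin n)) : blk (1 : Matrix (Fin n) (Fin n) ℝ) S Sᶜ = 0 := by
  ext i j
  have : i.val ≠ j.val := by
    intro h
    have hj := j.prop
    rw [← h] at hj
    exact (Finset.mem_compl.mp hj) i.prop
  simp [blk, Matrix.one_apply, this]

lemma blk_sub_smul (S T : Finset (Fin n)) (G : Matrix (Fin n) (Fin n) ℝ) (δ : ℝ) :
    blk (1 - δ • G) S T = blk 1 S T - δ • blk G S T := by
  ext i j; simp [blk]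

lemma mulVec_ext (S : Finset (Fin n)) (A : Matrix (Fin n) (Fin n) ℝ) (x : {i // i ∈ S} → ℝ)
    (j : Fin n) : (A *ᵥ ext S x) j = ∑ i : {i // i ∈ S}, A j i.val * x i := by
  rw [Matrix.mulVec, dotProduct, sum_split S]
  have h2 : ∑ i : {x // x ∈ Sᶜ}, A j i.val * ext S x i.val = 0 := by
    apply Finset.sum_eq_zero
    intro i _
    have : ¬ (i.val ∈ S) := Finset.mem_compl.mp i.prop
    simp [ext, this]
  rw [h2, add_zero]
  apply Finset.sum_congr rfl
  intro i _
  simp [ext, i.prop]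

lemma mulVec_ext_restr (S T : Finset (Fin n)) (A : Matrix (Fin n) (Fin n) ℝ)
    (x : {i // i ∈ S} → ℝ) (i : {i // i ∈ T}) :
    (A *ᵥ ext S x) i.val = (blk A T S *ᵥ x) i := by
  rw [mulVec_ext]
  rfl

lemma dot_ext_left (S : Finset (Fin n)) (x : {i // i ∈ S} → ℝ) (w : Fin n → ℝ) :
    (ext S x) ⬝ᵥ w = x ⬝ᵥ restr w S := by
  rw [dotProduct, sum_split S]
  have h2 : ∑ i : {x // x ∈ Sᶜ}, ext S x i.val * w i.val = 0 := by
    apply Finset.sum_eq_zero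
    intro i _
    have : ¬ (i.val ∈ S) := Finset.mem_compl.mp i.prop
    simp [ext, this]
  rw [h2, add_zero]
  apply Finset.sum_congr rfl
  intro i _
  simp [ext, i.prop, restr]

lemma restr_ext (S : Finset (Fin n)) (x : {i // i ∈ S} → ℝ) : restr (ext S x) S = x := by
  ext i; simp [restr, ext, i.prop]

lemma ext_ne_zero (S : Finset (Fin n)) (x : {i // i ∈ S} → ℝ) (hx : x ≠ 0) : ext S x ≠ 0 := by
  intro h
  apply hx
  ext i
  have := congrFun h i.val
  simpa [ext, i.prop] using this

/-! ### spectral facts -/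

noncomputable def coeffs (G : Matrix (Fin n) (Fin n) ℝ) (hG : G.IsHermitian)
    (x : Fin n → ℝ) : Fin n → ℝ :=
  hG.eigenvectorBasis.repr ((WithLp.equiv 2 _).symm x)

lemma dot_eq_sum_coeffs (G : Matrix (Fin n) (Fin n) ℝ) (hG : G.IsHermitian) (x y : Fin n → ℝ) :
    x ⬝ᵥ y = ∑ i, coeffs G hG x i * coeffs G hG y i := by
  have h := hG.eigenvectorBasis.repr.inner_map_map
    ((WithLp.equiv 2 _).symm x) ((WithLp.equiv 2 _).symm y)
  have h1 : (inner ℝ ((WithLp.equiv 2 _).symm x) ((WithLp.equiv 2 _).symm y) : ℝ) = x ⬝ᵥ y := by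
    simp [PiLp.inner_apply, RCLike.inner_apply, dotProduct, mul_comm]
  rw [← h1, ← h]
  simp only [PiLp.inner_apply, RCLike.inner_apply, coeffs, starRingEnd_apply, star_trivial]
  exact Finset.sum_congr rfl fun i _ => mul_comm _ _

lemma coeffs_mulVec (G : Matrix (Fin n) (Fin n) ℝ) (hG : G.IsHermitian) (x : Fin n → ℝ)
    (i : Fin n) : coeffs G hG (G *ᵥ x) i = hG.eigenvalues i * coeffs G hG x i := by
  classical
  have hsymm : (Matrix.toEuclideanLin G).IsSymmetric :=
    Matrix.isHermitian_iff_isSymmetric.mp hG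
  have key : Matrix.toEuclideanLin G ((WithLp.equiv 2 _).symm x)
      = (WithLp.equiv 2 _).symm (G *ᵥ x) := by
    rfl
  rw [coeffs, ← key, hG.eigenvectorBasis.repr_apply_apply, ← hsymm _ _,
    coeffs, hG.eigenvectorBasis.repr_apply_apply]
  have hb : Matrix.toEuclideanLin G (hG.eigenvectorBasis i)
      = hG.eigenvalues i • hG.eigenvectorBasis i := by
    apply (WithLp.equiv 2 _).injective
    simpa [Matrix.toEuclideanLin_apply] using hG.mulVec_eigenvectorBasis i
  rw [hb, real_inner_smul_left]

lemma coeffs_ne_zero (G : Matrix (Fin n) (Fin n) ℝ) (hG : G.IsHermitian) (x : Fin n → ℝ)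
    (hx : x ≠ 0) : coeffs G hG x ≠ 0 := by
  intro h
  apply hx
  have : (WithLp.equiv 2 _).symm x = 0 := by
    apply hG.eigenvectorBasis.repr.map_eq_zero_iff.mp
    exact (WithLp.ofLp_eq_zero 2).mp h
  simpa using congrArg (WithLp.equiv 2 _) this

/-- positive definiteness of `1 - δ • G` -/
lemma posdef_one_sub (G : Matrix (Fin n) (Fin n) ℝ) (δ : ℝ) (hG : G.IsHermitian) (hδ : 0 ≤ δ)
    (hev : ∀ i, δ * |hG.eigenvalues i| < 1) : (1 - δ • G).PosDef := by
  have hkey : ∀ i, δ * hG.eigenvalues i < 1 := fun i =>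
    lt_of_le_of_lt (mul_le_mul_of_nonneg_left (le_abs_self _) hδ) (hev i)
  refine Matrix.PosDef.of_dotProduct_mulVec_pos ?_ ?_
  · rw [Matrix.IsHermitian, Matrix.conjTranspose_sub, Matrix.conjTranspose_smul,
      Matrix.conjTranspose_one, star_trivial, hG.eq]
  · intro x hx
    have hq : star x ⬝ᵥ ((1 - δ • G) *ᵥ x)
        = ∑ i, (1 - δ * hG.eigenvalues i) * (coeffs G hG x i)^2 := by
      rw [star_trivial, Matrix.sub_mulVec, Matrix.smul_mulVec, Matrix.one_mulVec,
        dotProduct_sub, dotProduct_smul]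
      rw [dot_eq_sum_coeffs G hG x x, dot_eq_sum_coeffs G hG x (G *ᵥ x)]
      rw [Finset.smul_sum, ← Finset.sum_sub_distrib]
      apply Finset.sum_congr rfl
      intro i _
      rw [coeffs_mulVec]
      simp only [smul_eq_mul]
      ring
    rw [hq]
    have hc := coeffs_ne_zero G hG x hx
    obtain ⟨i0, hi0⟩ := Function.ne_iff.mp hc
    have hi0' : coeffs G hG x i0 ≠ 0 := by simpa using hi0
    refine Finset.sum_pos' (fun i _ => ?_) ⟨i0, Finset.mem_univ i0, ?_⟩
    · have h3 : 0 ≤ 1 - δ * hG.eigenvalues i := by linarith [hkey i]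
      positivity
    · have h3 : 0 < 1 - δ * hG.eigenvalues i0 := by linarith [hkey i0]
      have h4 : 0 < (coeffs G hG x i0)^2 := by positivity
      exact mul_pos h3 h4

/-- principal blocks of PD matrices are PD -/
lemma posdef_blk (A : Matrix (Fin n) (Fin n) ℝ) (hA : A.PosDef) (S : Finset (Fin n)) :
    (blk A S S).PosDef := by
  refine Matrix.PosDef.of_dotProduct_mulVec_pos ?_ ?_
  · ext i j
    have := congrFun (congrFun hA.isHermitian i.val) j.val
    simpa [blk, Matrix.conjTranspose_apply] using this
  · intro x hx
    have key : star x ⬝ᵥ (blk A S S *ᵥ x) = star (ext S x) ⬝ᵥ (A *ᵥ ext S x) := by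
      rw [star_trivial, star_trivial]
      have : blk A S S *ᵥ x = restr (A *ᵥ ext S x) S := by
        ext i
        exact (mulVec_ext_restr S S A x i).symm
      rw [this, ← dot_ext_left]
    rw [key]
    exact hA.dotProduct_mulVec_pos (ext_ne_zero S x hx)

open scoped Matrix.Norms.L2Operator in
lemma inv_one_sub_entries_nonneg {ι : Type*} [Fintype ι] [DecidableEq ι]
    (C : Matrix ι ι ℝ) (hC : ‖C‖ < 1) (hnn : ∀ i j, 0 ≤ C i j) (i j : ι) :
    0 ≤ (1 - C)⁻¹ i j := by
  have hpow : ∀ (k : ℕ) (i j : ι), 0 ≤ (C ^ k) i j := by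
    intro k
    induction k with
    | zero =>
      intro i j
      rcases eq_or_ne i j with h | h <;> simp [pow_zero, Matrix.one_apply, h]
    | succ k ih =>
      intro i j
      rw [pow_succ, Matrix.mul_apply]
      exact Finset.sum_nonneg fun l _ => mul_nonneg (ih i l) (hnn l j)
  have hinv : (1 - C)⁻¹ = Ring.inverse (1 - C) := Matrix.nonsing_inv_eq_ringInverse _
  have hS : HasSum (fun k : ℕ => C ^ k) (Ring.inverse (1 - C)) :=
    hasSum_geom_series_inverse C hC
  have hS2 : HasSum (fun k : ℕ => (C ^ k) i j) (Ring.inverse (1 - C) i j) := by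
    have := hS.mapL (LinearMap.toContinuousLinearMap (Matrix.entryLinearMap ℝ ℝ i j))
    simpa using this
  rw [hinv]
  exact hS2.nonneg fun k => hpow k i j

open scoped Matrix.Norms.L2Operator in
lemma norm_smul_blk_le (G : Matrix (Fin n) (Fin n) ℝ) (hG : G.IsHermitian)
    (S : Finset (Fin n)) (δ r : ℝ) (hδ : 0 ≤ δ) (hr : 0 ≤ r)
    (hev : ∀ i, δ * |hG.eigenvalues i| ≤ r) :
    ‖δ • blk G Sᶜ Sᶜ‖ ≤ r := by
  rw [Matrix.l2_opNorm_def]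
  apply ContinuousLinearMap.opNorm_le_bound _ hr
  intro X
  set x : {i // i ∈ Sᶜ} → ℝ := WithLp.equiv 2 _ X with hx
  have hX : X = (WithLp.equiv 2 _).symm x := rfl
  set e : Fin n → ℝ := ext Sᶜ x with he
  -- the applied CLM
  have happ : (Matrix.toEuclideanLin.trans LinearMap.toContinuousLinearMap)
        (δ • blk G Sᶜ Sᶜ) X = (WithLp.equiv 2 _).symm ((δ • blk G Sᶜ Sᶜ) *ᵥ x) := by
    rw [hX]
    show Matrix.toEuclideanLin (δ • blk G Sᶜ Sᶜ) ((WithLp.equiv 2 _).symm x) = _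
    rfl
  rw [happ]
  -- squared norms
  have hnormX : ‖X‖ = Real.sqrt (x ⬝ᵥ x) := by
    rw [EuclideanSpace.norm_eq]
    congr 1
    rw [dotProduct]
    apply Finset.sum_congr rfl
    intro i _
    rw [hX, WithLp.equiv_symm_apply, PiLp.toLp_apply]
    rw [Real.norm_eq_abs, sq_abs, sq]
  have hnormY : ‖(WithLp.equiv 2 _).symm ((δ • blk G Sᶜ Sᶜ) *ᵥ x)‖
      = Real.sqrt (∑ i : {i // i ∈ Sᶜ}, (((δ • blk G Sᶜ Sᶜ) *ᵥ x) i)^2) := by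
    rw [EuclideanSpace.norm_eq]
    congr 1
    apply Finset.sum_congr rfl
    intro i _
    rw [WithLp.equiv_symm_apply, PiLp.toLp_apply, Real.norm_eq_abs, sq_abs]
  rw [hnormY, hnormX]
  -- key sum inequality
  have hsum : (∑ i : {i // i ∈ Sᶜ}, (((δ • blk G Sᶜ Sᶜ) *ᵥ x) i)^2) ≤ r^2 * (x ⬝ᵥ x) := by
    have step1 : ∀ i : {i // i ∈ Sᶜ}, ((δ • blk G Sᶜ Sᶜ) *ᵥ x) i = δ * (G *ᵥ e) i.val := by
      intro i
      rw [Matrix.smul_mulVec, Pi.smul_apply, smul_eq_mul, mulVec_ext_restr Sᶜ Sᶜ G x i]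
    calc (∑ i : {i // i ∈ Sᶜ}, (((δ • blk G Sᶜ Sᶜ) *ᵥ x) i)^2)
        = ∑ i : {i // i ∈ Sᶜ}, (δ * (G *ᵥ e) i.val)^2 := by
          exact Finset.sum_congr rfl fun i _ => by rw [step1 i]
      _ ≤ ∑ j, (δ * (G *ᵥ e) j)^2 := by
          rw [sum_split Sᶜ (fun j => (δ * (G *ᵥ e) j)^2)]
          have : (0:ℝ) ≤ ∑ i : {x // x ∈ Sᶜᶜ}, (δ * (G *ᵥ e) i.val)^2 :=
            Finset.sum_nonneg fun i _ => sq_nonneg _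
          linarith
      _ = δ^2 * ((G *ᵥ e) ⬝ᵥ (G *ᵥ e)) := by
          rw [dotProduct, Finset.mul_sum]
          exact Finset.sum_congr rfl fun j _ => by ring
      _ = δ^2 * ∑ i, (hG.eigenvalues i * coeffs G hG e i)^2 := by
          rw [dot_eq_sum_coeffs G hG]
          congr 1
          exact Finset.sum_congr rfl fun i _ => by rw [coeffs_mulVec]; ring
      _ ≤ r^2 * ∑ i, (coeffs G hG e i)^2 := by
          rw [Finset.mul_sum, Finset.mul_sum]
          apply Finset.sum_le_sum
          intro i _
          have h1 : δ * |hG.eigenvalues i| ≤ r := hev i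
          have h2 : 0 ≤ δ * |hG.eigenvalues i| := mul_nonneg hδ (abs_nonneg _)
          have h3 : (δ * hG.eigenvalues i)^2 ≤ r^2 := by
            have : (δ * hG.eigenvalues i)^2 = (δ * |hG.eigenvalues i|)^2 := by
              rw [mul_pow, mul_pow, sq_abs]
            rw [this]
            nlinarith
          calc δ^2 * (hG.eigenvalues i * coeffs G hG e i)^2
              = (δ * hG.eigenvalues i)^2 * (coeffs G hG e i)^2 := by ring
            _ ≤ r^2 * (coeffs G hG e i)^2 := by nlinarith [sq_nonneg (coeffs G hG e i)]
      _ = r^2 * (e ⬝ᵥ e) := by rw [dot_eq_sum_coeffs G hG e e]; congr 1; exact Finset.sum_congr rfl fun i _ => (sq (coeffs G hG e i)) ▸ by ring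
      _ = r^2 * (x ⬝ᵥ x) := by
          rw [he, dot_ext_left, restr_ext]
  calc Real.sqrt (∑ i : {i // i ∈ Sᶜ}, (((δ • blk G Sᶜ Sᶜ) *ᵥ x) i)^2)
      ≤ Real.sqrt (r^2 * (x ⬝ᵥ x)) := Real.sqrt_le_sqrt hsum
    _ = r * Real.sqrt (x ⬝ᵥ x) := by
        rw [Real.sqrt_mul (sq_nonneg r), Real.sqrt_sq hr]

end VAux

open scoped ENNReal NNReal in
open scoped Matrix.Norms.L2Operator in
theorem v_identity_and_nonneg {n : ℕ} (G : Matrix (Fin n) (Fin n) ℝ) (δ : ℝ)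
    (hsym : G.IsSymm) (hnn : ∀ i j, 0 ≤ G i j) (hδ : 0 ≤ δ)
    (hlt : ENNReal.ofReal δ * spectralRadius ℝ G < 1)
    (S : Finset (Fin n)) :
    (((blk ((1 - δ • G)⁻¹) S S)⁻¹ *ᵥ restr ((1 - δ • G)⁻¹ *ᵥ fun _ => 1) S)
        = (δ • (blk G S Sᶜ *ᵥ ((1 - δ • blk G Sᶜ Sᶜ)⁻¹ *ᵥ fun _ => (1 : ℝ))))
            + (fun _ => (1 : ℝ))) ∧
    ∀ i : {x // x ∈ S},
      0 ≤ ((blk ((1 - δ • G)⁻¹) S S)⁻¹ *ᵥ restr ((1 - δ • G)⁻¹ *ᵥ fun _ => 1) S) i := by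
  classical
  have hG : G.IsHermitian := by
    rw [Matrix.IsHermitian, Matrix.conjTranspose_eq_transpose_of_trivial]
    exact hsym
  set r : ℝ := (ENNReal.ofReal δ * spectralRadius ℝ G).toReal with hrdef
  have hne : ENNReal.ofReal δ * spectralRadius ℝ G ≠ ⊤ := ne_top_of_lt hlt
  have hr1 : r < 1 := by
    have h := (ENNReal.toReal_lt_toReal hne ENNReal.one_ne_top).mpr hlt
    simpa only [ENNReal.toReal_one] using h
  have hr0 : 0 ≤ r := ENNReal.toReal_nonneg
  have hev : ∀ i, δ * |hG.eigenvalues i| ≤ r := by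
    intro i
    have hmem := hG.eigenvalues_mem_spectrum_real i
    have h1 : (‖hG.eigenvalues i‖₊ : ℝ≥0∞) ≤ spectralRadius ℝ G := by
      rw [spectralRadius]
      exact le_iSup₂ (α := ℝ≥0∞) (hG.eigenvalues i) hmem
    have h2 : ENNReal.ofReal δ * (‖hG.eigenvalues i‖₊ : ℝ≥0∞)
        ≤ ENNReal.ofReal δ * spectralRadius ℝ G := mul_le_mul_right h1 _
    have h3 := ENNReal.toReal_mono hne h2
    calc δ * |hG.eigenvalues i|
        = (ENNReal.ofReal δ * (‖hG.eigenvalues i‖₊ : ℝ≥0∞)).toReal := by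
          rw [ENNReal.toReal_mul, ENNReal.toReal_ofReal hδ, ENNReal.coe_toReal, coe_nnnorm,
            Real.norm_eq_abs]
      _ ≤ r := h3
  have hevlt : ∀ i, δ * |hG.eigenvalues i| < 1 := fun i => lt_of_le_of_lt (hev i) hr1
  set A := 1 - δ • G with hAdef
  have hApd : A.PosDef := VAux.posdef_one_sub G δ hG hδ hevlt
  have hAdet : IsUnit A.det := isUnit_iff_ne_zero.mpr hApd.det_pos.ne'
  set M := A⁻¹ with hMdef
  have hMpd : M.PosDef := hApd.inv
  have hMA : M * A = 1 := Matrix.nonsing_inv_mul A hAdet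
  set P := blk M S S with hPdef
  set Q := blk M S Sᶜ with hQdef
  set W := blk A Sᶜ Sᶜ with hWdef
  set K := blk G S Sᶜ with hKdef
  have hPpd : P.PosDef := VAux.posdef_blk M hMpd S
  have hWpd : W.PosDef := VAux.posdef_blk A hApd Sᶜ
  have hPdet : IsUnit P.det := isUnit_iff_ne_zero.mpr hPpd.det_pos.ne'
  have hWdet : IsUnit W.det := isUnit_iff_ne_zero.mpr hWpd.det_pos.ne'
  have hW1 : W = 1 - δ • blk G Sᶜ Sᶜ := by
    rw [hWdef, hAdef, VAux.blk_sub_smul, VAux.blk_one_same]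
  have hblkAS : blk A S Sᶜ = -(δ • K) := by
    rw [hAdef, VAux.blk_sub_smul, VAux.blk_one_disj, hKdef]
    simp
  have h0 : P * blk A S Sᶜ + Q * W = 0 := by
    have h := congrArg (fun X => blk X S Sᶜ) hMA
    rw [VAux.blk_mul S S Sᶜ M A, VAux.blk_one_disj] at h
    exact h
  have h1 : Q * W = P * (δ • K) := by
    rw [hblkAS, Matrix.mul_neg] at h0
    rw [neg_add_eq_zero] at h0
    exact h0.symm
  have hQ : Q = P * (δ • K) * W⁻¹ := by
    calc Q = Q * (W * W⁻¹) := by rw [Matrix.mul_nonsing_inv W hWdet, Matrix.mul_one]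
      _ = (Q * W) * W⁻¹ := by rw [Matrix.mul_assoc]
      _ = P * (δ • K) * W⁻¹ := by rw [h1]
  have hrestr : restr (M *ᵥ fun _ => 1) S
      = P *ᵥ (fun _ => 1) + Q *ᵥ (fun _ => 1) := by
    have h := VAux.restr_mulVec S S M (fun _ => 1)
    rw [h]
    rfl
  have hv : P⁻¹ *ᵥ restr (M *ᵥ fun _ => 1) S
      = (fun _ => 1) + (δ • K) *ᵥ (W⁻¹ *ᵥ (fun _ => 1)) := by
    rw [hrestr, Matrix.mulVec_add]
    congr 1
    · rw [Matrix.mulVec_mulVec, Matrix.nonsing_inv_mul P hPdet, Matrix.one_mulVec]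
    · rw [hQ, Matrix.mulVec_mulVec]
      have : P⁻¹ * (P * (δ • K) * W⁻¹) = (δ • K) * W⁻¹ := by
        rw [Matrix.mul_assoc P (δ • K) W⁻¹, ← Matrix.mul_assoc P⁻¹ P _,
          Matrix.nonsing_inv_mul P hPdet, Matrix.one_mul]
      rw [this, ← Matrix.mulVec_mulVec]
  -- nonnegativity of W⁻¹ entries
  set C := δ • blk G Sᶜ Sᶜ with hCdef
  have hCnorm : ‖C‖ < 1 :=
    lt_of_le_of_lt (VAux.norm_smul_blk_le G hG S δ r hδ hr0 hev) hr1
  have hCnn : ∀ i j, 0 ≤ C i j := by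
    intro i j
    rw [hCdef]
    simp only [Matrix.smul_apply, smul_eq_mul]
    exact mul_nonneg hδ (hnn _ _)
  have hWinv_nn : ∀ i j, 0 ≤ W⁻¹ i j := by
    intro i j
    rw [hW1]
    exact VAux.inv_one_sub_entries_nonneg C hCnorm hCnn i j
  have hw_nn : ∀ j, 0 ≤ (W⁻¹ *ᵥ (fun _ => 1) : _ → ℝ) j := by
    intro j
    rw [Matrix.mulVec]
    exact Finset.sum_nonneg fun k _ => by
      simpa using mul_nonneg (hWinv_nn j k) zero_le_one
  constructor
  · rw [← hW1, hv, add_comm, Matrix.smul_mulVec]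
  · intro i
    rw [hv]
    have h2 : 0 ≤ ((δ • K) *ᵥ (W⁻¹ *ᵥ fun _ => 1) : _ → ℝ) i := by
      rw [Matrix.mulVec]
      apply Finset.sum_nonneg
      intro k _
      apply mul_nonneg
      · rw [hKdef]
        simp only [Matrix.smul_apply, smul_eq_mul]
        exact mul_nonneg hδ (hnn _ _)
      · exact hw_nn k
    have : (0:ℝ) ≤ 1 + ((δ • K) *ᵥ (W⁻¹ *ᵥ fun _ => 1) : _ → ℝ) i := by linarith
    simpa using this
end

section
/- Single-node walk-deletion formula (Ballester–Calvó-Armengol–Zenou Lemma 1, derived as a special case): for distinct indices j, k ≠ i, m_{jk}(G) - w_{jk}(G,{i}) = m_{ji}(G) m_{ik}(G) / m_{ii}(G), where w_{jk}(G,{i}) is the (j,k) entry of (I - δG_{-i,-i})^{-1} and m_{ab}(G) are entries of (I - δG)^{-1}. -/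
open Matrix

theorem single_node_walk_deletion {n : ℕ} (G : Matrix (Fin n) (Fin n) ℝ) (δ : ℝ)
    (i j k : Fin n) (hj : j ≠ i) (hk : k ≠ i) (hjk : j ≠ k)
    (h1 : IsUnit (1 - δ • G))
    (h2 : IsUnit (1 - δ • G.submatrix (Subtype.val : {x : Fin n // x ≠ i} → Fin n) (Subtype.val : {x : Fin n // x ≠ i} → Fin n)))
    (hm : ((1 - δ • G)⁻¹) i i ≠ 0) :
    ((1 - δ • G)⁻¹) j k
        - ((1 - δ • G.submatrix (Subtype.val : {x : Fin n // x ≠ i} → Fin n) (Subtype.val : {x : Fin n // x ≠ i} → Fin n))⁻¹)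
            (⟨j, hj⟩ : {x : Fin n // x ≠ i}) (⟨k, hk⟩ : {x : Fin n // x ≠ i})
      = ((1 - δ • G)⁻¹) j i * ((1 - δ • G)⁻¹) i k / ((1 - δ • G)⁻¹) i i := by
  set A : Matrix (Fin n) (Fin n) ℝ := 1 - δ • G with hA
  set M : Matrix (Fin n) (Fin n) ℝ := A⁻¹ with hM
  have hdet : IsUnit A.det := (Matrix.isUnit_iff_isUnit_det A).mp h1
  have hAM : A * M = 1 := Matrix.mul_nonsing_inv A hdet
  have key : ∀ a b : Fin n, (∑ c, A a c * M c b) = if a = b then 1 else 0 := by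
    intro a b
    have := congrFun (congrFun hAM a) b
    simpa [Matrix.mul_apply, Matrix.one_apply] using this
  -- the submatrix equals A's submatrix
  have hBsub : (1 - δ • G.submatrix (Subtype.val : {x : Fin n // x ≠ i} → Fin n) (Subtype.val : {x : Fin n // x ≠ i} → Fin n))
      = A.submatrix Subtype.val Subtype.val := by
    ext a b
    simp [hA, Matrix.submatrix_apply, Matrix.one_apply, Subtype.ext_iff]
  set W : Matrix {x : Fin n // x ≠ i} {x : Fin n // x ≠ i} ℝ :=
    fun a b => M a.val b.val - M a.val i * M i b.val / M i i with hW
  have hBW : (A.submatrix (Subtype.val : {x : Fin n // x ≠ i} → Fin n) Subtype.val) * W = 1 := by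
    ext a b
    rw [Matrix.mul_apply]
    have hsub : (∑ c : {x : Fin n // x ≠ i}, A a.val c.val * W c b)
        = ∑ c ∈ Finset.univ.erase i, A a.val c * (M c b.val - M c i * M i b.val / M i i) := by
      rw [Finset.sum_subtype (p := fun x => x ≠ i) (Finset.univ.erase i) (fun x => by simp) (fun c => A a.val c * (M c b.val - M c i * M i b.val / M i i))]
    have herase : ∀ f : Fin n → ℝ, (∑ c ∈ Finset.univ.erase i, f c) = (∑ c, f c) - f i := by
      intro f
      have := Finset.sum_erase_add Finset.univ f (Finset.mem_univ i)
      linarith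
    simp only [Matrix.submatrix_apply]
    rw [hsub, herase]
    have expand : (∑ c, A a.val c * (M c b.val - M c i * M i b.val / M i i))
        = (∑ c, A a.val c * M c b.val) - (∑ c, A a.val c * M c i) * (M i b.val / M i i) := by
      rw [Finset.sum_mul, ← Finset.sum_sub_distrib]
      congr 1; ext c; ring
    rw [expand, key, key]
    have hai : (a.val = i) = False := by simp [a.prop]
    have hib : M i i * M i b.val / M i i = M i b.val := by
      field_simp
    rw [Matrix.one_apply]
    by_cases hab : a = b
    · subst hab
      simp [hai, hib]
    · have hab' : (a.val = b.val) = False := by simp [Subtype.ext_iff.not.mp hab]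
      simp [hai, hab', hib, hab]
  have hBinv : (1 - δ • G.submatrix (Subtype.val : {x : Fin n // x ≠ i} → Fin n) (Subtype.val : {x : Fin n // x ≠ i} → Fin n))⁻¹ = W := by
    rw [hBsub]
    exact Matrix.inv_eq_right_inv hBW
  rw [hBinv]
  show M j k - (M j k - M j i * M i k / M i i) = M j i * M i k / M i i
  ring
end

section
/- Bridge formula: let G be block diagonal with blocks N¹ and N², let i be an index in the first block and j in the second, and let E_{ij} be the matrix with ones at (i,j) and (j,i) and zeros elsewhere. If I - δG and I - δ(G + E_{ij}) are invertible and 1 - δ² m_{ii} m_{jj} ≠ 0, then 1ᵀ(I - δ(G + E_{ij}))^{-1}1 - 1ᵀ(I - δG)^{-1}1 = δ · (δ m_{jj} b_i² + δ m_{ii} b_j² + 2 b_i b_j)/(1 - δ² m_{ii} m_{jj}), where m_{ii} = m_{ii}(N¹), m_{jj} = m_{jj}(N²), b_i = b_i(N¹,1), b_j = b_j(N²,1). -/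
/-!
Write `A = I - δG`, `u = e_i`, `v = e_j`, so that `I - δ(G + E_{ij}) = A - δ(uvᵀ + vuᵀ)` is a
symmetric rank-two update of `A`. Since `A⁻¹` is block diagonal, `uᵀA⁻¹v = 0`, and the
Sherman–Morrison–Woodbury formula collapses to an explicit correction of `A⁻¹` by the rank-one
matrices built from `p = A⁻¹u` and `q = A⁻¹v`, with denominator `1 - δ² m_{ii} m_{jj}`.
Sandwiching it between `1ᵀ` and `1` gives the formula, because `1ᵀp = b_i` and `1ᵀq = b_j`.
-/

open Matrix

section RankTwoUpdate

variable {R K n : Type*} [Fintype n]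

lemma Matrix.IsSymm.vecMul_eq_mulVec [CommSemiring R] {S : Matrix n n R} (hS : S.IsSymm)
    (x : n → R) : x ᵥ* S = S *ᵥ x := by
  rw [← mulVec_transpose, hS.eq]

lemma Matrix.IsSymm.dotProduct_mulVec_comm [CommSemiring R] {S : Matrix n n R} (hS : S.IsSymm)
    (x y : n → R) : x ⬝ᵥ S *ᵥ y = y ⬝ᵥ S *ᵥ x := by
  rw [dotProduct_mulVec, hS.vecMul_eq_mulVec, dotProduct_comm]

variable [Field K] [DecidableEq n]

theorem Matrix.inv_sub_smul_vecMulVec_add_vecMulVec {A : Matrix n n K} (hA : IsUnit A)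
    (hAs : A.IsSymm) (u v : n → K) (δ : K) (huv : u ⬝ᵥ A⁻¹ *ᵥ v = 0)
    (hd : 1 - δ ^ 2 * (u ⬝ᵥ A⁻¹ *ᵥ u) * (v ⬝ᵥ A⁻¹ *ᵥ v) ≠ 0) :
    (A - δ • (vecMulVec u v + vecMulVec v u))⁻¹ =
      A⁻¹ + (δ / (1 - δ ^ 2 * (u ⬝ᵥ A⁻¹ *ᵥ u) * (v ⬝ᵥ A⁻¹ *ᵥ v))) •
        (vecMulVec (A⁻¹ *ᵥ u) (A⁻¹ *ᵥ v) + vecMulVec (A⁻¹ *ᵥ v) (A⁻¹ *ᵥ u) +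
          (δ * (v ⬝ᵥ A⁻¹ *ᵥ v)) • vecMulVec (A⁻¹ *ᵥ u) (A⁻¹ *ᵥ u) +
          (δ * (u ⬝ᵥ A⁻¹ *ᵥ u)) • vecMulVec (A⁻¹ *ᵥ v) (A⁻¹ *ᵥ v)) := by
  set p := A⁻¹ *ᵥ u
  set q := A⁻¹ *ᵥ v
  set d := 1 - δ ^ 2 * (u ⬝ᵥ p) * (v ⬝ᵥ q)
  set B := A - δ • (vecMulVec u v + vecMulVec v u)
  have hAA : A * A⁻¹ = 1 := mul_nonsing_inv A ((isUnit_iff_isUnit_det A).mp hA)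
  have hvp : v ⬝ᵥ p = 0 := by rw [hAs.inv.dotProduct_mulVec_comm, huv]
  have hBA : B * A⁻¹ = 1 - δ • (vecMulVec u q + vecMulVec v p) := by
    simp only [B, Matrix.sub_mul, Matrix.smul_mul, Matrix.add_mul, hAA, vecMulVec_mul,
      hAs.inv.vecMul_eq_mulVec, p, q]
  have hBp : B *ᵥ p = u - (δ * (u ⬝ᵥ p)) • v := by
    rw [mulVec_mulVec, hBA]
    simp only [sub_mulVec, one_mulVec, smul_mulVec, add_mulVec, vecMulVec_mulVec,
      op_smul_eq_smul, dotProduct_comm _ u, huv]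
    module
  have hBq : B *ᵥ q = v - (δ * (v ⬝ᵥ q)) • u := by
    rw [mulVec_mulVec, hBA]
    simp only [sub_mulVec, one_mulVec, smul_mulVec, add_mulVec, vecMulVec_mulVec,
      op_smul_eq_smul, dotProduct_comm _ v, hvp]
    module
  have hcd : δ / d * d = δ := div_mul_cancel₀ δ hd
  apply inv_eq_right_inv
  -- the product expands to `1 + (δ / d * d - δ) • (uqᵀ + vpᵀ)`
  simp only [Matrix.mul_add, Matrix.mul_smul, hBA, mul_vecMulVec, hBp, hBq, sub_vecMulVec,
    smul_vecMulVec]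
  linear_combination (norm := module) hcd • (vecMulVec u q + vecMulVec v p)

theorem Matrix.dotProduct_mulVec_inv_sub_smul_vecMulVec_add_vecMulVec {A : Matrix n n K}
    (hA : IsUnit A) (hAs : A.IsSymm) (u v : n → K) (δ : K) (huv : u ⬝ᵥ A⁻¹ *ᵥ v = 0)
    (hd : 1 - δ ^ 2 * (u ⬝ᵥ A⁻¹ *ᵥ u) * (v ⬝ᵥ A⁻¹ *ᵥ v) ≠ 0) (w : n → K) :
    w ⬝ᵥ (A - δ • (vecMulVec u v + vecMulVec v u))⁻¹ *ᵥ w - w ⬝ᵥ A⁻¹ *ᵥ w =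
      δ * (δ * (v ⬝ᵥ A⁻¹ *ᵥ v) * (u ⬝ᵥ A⁻¹ *ᵥ w) ^ 2 + δ * (u ⬝ᵥ A⁻¹ *ᵥ u) * (v ⬝ᵥ A⁻¹ *ᵥ w) ^ 2
        + 2 * (u ⬝ᵥ A⁻¹ *ᵥ w) * (v ⬝ᵥ A⁻¹ *ᵥ w)) /
        (1 - δ ^ 2 * (u ⬝ᵥ A⁻¹ *ᵥ u) * (v ⬝ᵥ A⁻¹ *ᵥ v)) := by
  rw [inv_sub_smul_vecMulVec_add_vecMulVec hA hAs u v δ huv hd]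
  simp only [add_mulVec, smul_mulVec, vecMulVec_mulVec, op_smul_eq_smul, dotProduct_add,
    dotProduct_smul, smul_eq_mul, dotProduct_comm (A⁻¹ *ᵥ _) w, hAs.inv.dotProduct_mulVec_comm w]
  field_simp
  ring

end RankTwoUpdate

section BlockDiagonal

variable {l m α : Type*} [DecidableEq l] [DecidableEq m]

lemma Matrix.one_sub_smul_fromBlocks_zero [Ring α] (δ : α) (A : Matrix l l α)
    (D : Matrix m m α) :
    1 - δ • fromBlocks A 0 0 D = fromBlocks (1 - δ • A) 0 0 (1 - δ • D) := by
  ext (a | a) (b | b) <;> simp [one_apply]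

variable [Fintype l] [Fintype m]

lemma Matrix.single_one_dotProduct_mulVec_single_one [NonAssocSemiring α] (M : Matrix l l α)
    (a b : l) : Pi.single a 1 ⬝ᵥ M *ᵥ Pi.single b 1 = M a b := by
  rw [single_one_dotProduct, mulVec_single_one, col_apply]

lemma Matrix.inv_fromBlocks_zero_zero [CommRing α] {A : Matrix l l α} {D : Matrix m m α}
    (h : IsUnit (fromBlocks A 0 0 D)) : (fromBlocks A 0 0 D)⁻¹ = fromBlocks A⁻¹ 0 0 D⁻¹ := by
  obtain ⟨hA, hD⟩ := isUnit_fromBlocks_zero₂₁.mp h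
  simpa using inv_fromBlocks_zero₂₁_of_isUnit_iff A 0 D (iff_of_true hA hD)

end BlockDiagonal

theorem bridge_formula_general {n₁ n₂ : ℕ}
    (N1 : Matrix (Fin n₁) (Fin n₁) ℝ) (N2 : Matrix (Fin n₂) (Fin n₂) ℝ) (δ : ℝ)
    (hs1 : N1.IsSymm) (hs2 : N2.IsSymm) (i : Fin n₁) (j : Fin n₂)
    (hG : IsUnit (1 - δ • Matrix.fromBlocks N1 0 0 N2))
    (hden : 1 - δ ^ 2 * ((1 - δ • N1)⁻¹ i i) * ((1 - δ • N2)⁻¹ j j) ≠ 0) :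
    ((∑ a, ((1 - δ • (Matrix.fromBlocks N1 0 0 N2 +
          (Matrix.single (Sum.inl i) (Sum.inr j) (1 : ℝ) +
            Matrix.single (Sum.inr j) (Sum.inl i) (1 : ℝ))))⁻¹ *ᵥ
            fun _ => (1 : ℝ)) a)
        - ∑ a, ((1 - δ • Matrix.fromBlocks N1 0 0 N2)⁻¹ *ᵥ fun _ => (1 : ℝ)) a)
      = δ * (δ * ((1 - δ • N2)⁻¹ j j) * (((1 - δ • N1)⁻¹ *ᵥ fun _ => (1 : ℝ)) i) ^ 2
            + δ * ((1 - δ • N1)⁻¹ i i) * (((1 - δ • N2)⁻¹ *ᵥ fun _ => (1 : ℝ)) j) ^ 2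
            + 2 * (((1 - δ • N1)⁻¹ *ᵥ fun _ => (1 : ℝ)) i)
                * (((1 - δ • N2)⁻¹ *ᵥ fun _ => (1 : ℝ)) j))
          / (1 - δ ^ 2 * ((1 - δ • N1)⁻¹ i i) * ((1 - δ • N2)⁻¹ j j)) := by
  set A := 1 - δ • fromBlocks N1 0 0 N2
  set u : Fin n₁ ⊕ Fin n₂ → ℝ := Pi.single (Sum.inl i) 1
  set v : Fin n₁ ⊕ Fin n₂ → ℝ := Pi.single (Sum.inr j) 1
  have hA : A = fromBlocks (1 - δ • N1) 0 0 (1 - δ • N2) := one_sub_smul_fromBlocks_zero δ N1 N2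
  have hAinv : A⁻¹ = fromBlocks (1 - δ • N1)⁻¹ 0 0 (1 - δ • N2)⁻¹ := by
    rw [hA] at hG ⊢
    exact inv_fromBlocks_zero_zero hG
  have hAs : A.IsSymm :=
    hA ▸ (isSymm_one.sub (hs1.smul δ)).fromBlocks transpose_zero (isSymm_one.sub (hs2.smul δ))
  have hupdate : 1 - δ • (fromBlocks N1 0 0 N2 + (single (Sum.inl i) (Sum.inr j) (1 : ℝ) +
      single (Sum.inr j) (Sum.inl i) 1)) = A - δ • (vecMulVec u v + vecMulVec v u) := by
    rw [single_eq_single_vecMulVec_single, single_eq_single_vecMulVec_single, smul_add,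
      sub_add_eq_sub_sub]
  have huv : u ⬝ᵥ A⁻¹ *ᵥ v = 0 := by
    rw [single_one_dotProduct_mulVec_single_one, hAinv, fromBlocks_apply₁₂, Matrix.zero_apply]
  have huu : u ⬝ᵥ A⁻¹ *ᵥ u = (1 - δ • N1)⁻¹ i i := by
    rw [single_one_dotProduct_mulVec_single_one, hAinv, fromBlocks_apply₁₁]
  have hvv : v ⬝ᵥ A⁻¹ *ᵥ v = (1 - δ • N2)⁻¹ j j := by
    rw [single_one_dotProduct_mulVec_single_one, hAinv, fromBlocks_apply₂₂]
  have hu1 : u ⬝ᵥ A⁻¹ *ᵥ 1 = ((1 - δ • N1)⁻¹ *ᵥ 1) i := by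
    rw [single_one_dotProduct, hAinv, fromBlocks_mulVec, Sum.elim_inl, zero_mulVec, add_zero,
      Pi.one_comp]
  have hv1 : v ⬝ᵥ A⁻¹ *ᵥ 1 = ((1 - δ • N2)⁻¹ *ᵥ 1) j := by
    rw [single_one_dotProduct, hAinv, fromBlocks_mulVec, Sum.elim_inr, zero_mulVec, zero_add,
      Pi.one_comp]
  simp only [← one_dotProduct, ← Pi.one_def]
  rw [hupdate, dotProduct_mulVec_inv_sub_smul_vecMulVec_add_vecMulVec hG hAs u v δ huv
    (by rwa [huu, hvv]), huu, hvv, hu1, hv1]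

theorem bridge_formula {n₁ n₂ : ℕ}
    (N1 : Matrix (Fin n₁) (Fin n₁) ℝ) (N2 : Matrix (Fin n₂) (Fin n₂) ℝ) (δ : ℝ)
    (hs1 : N1.IsSymm) (hs2 : N2.IsSymm) (i : Fin n₁) (j : Fin n₂)
    (h1 : IsUnit (1 - δ • N1)) (h2 : IsUnit (1 - δ • N2))
    (hG : IsUnit (1 - δ • Matrix.fromBlocks N1 0 0 N2))
    (hGE : IsUnit (1 - δ • (Matrix.fromBlocks N1 0 0 N2 +
      (Matrix.single (Sum.inl i) (Sum.inr j) (1 : ℝ) +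
        Matrix.single (Sum.inr j) (Sum.inl i) (1 : ℝ)))))
    (hden : 1 - δ ^ 2 * ((1 - δ • N1)⁻¹ i i) * ((1 - δ • N2)⁻¹ j j) ≠ 0) :
    ((∑ a, ((1 - δ • (Matrix.fromBlocks N1 0 0 N2 +
          (Matrix.single (Sum.inl i) (Sum.inr j) (1 : ℝ) +
            Matrix.single (Sum.inr j) (Sum.inl i) (1 : ℝ))))⁻¹ *ᵥ
            fun _ => (1 : ℝ)) a)
        - ∑ a, ((1 - δ • Matrix.fromBlocks N1 0 0 N2)⁻¹ *ᵥ fun _ => (1 : ℝ)) a)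
      = δ * (δ * ((1 - δ • N2)⁻¹ j j) * (((1 - δ • N1)⁻¹ *ᵥ fun _ => (1 : ℝ)) i) ^ 2
            + δ * ((1 - δ • N1)⁻¹ i i) * (((1 - δ • N2)⁻¹ *ᵥ fun _ => (1 : ℝ)) j) ^ 2
            + 2 * (((1 - δ • N1)⁻¹ *ᵥ fun _ => (1 : ℝ)) i)
                * (((1 - δ • N2)⁻¹ *ᵥ fun _ => (1 : ℝ)) j))
          / (1 - δ ^ 2 * ((1 - δ • N1)⁻¹ i i) * ((1 - δ • N2)⁻¹ j j)) :=
  bridge_formula_general N1 N2 δ hs1 hs2 i j hG hden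
end

section
/- Key link formula: let G be symmetric with I - δG invertible, let i ≠ j, and E_{ij} as above. If the quantity D := (1 - δ m_{ij}(G))² - δ² m_{ii}(G) m_{jj}(G) is nonzero and I - δ(G + E_{ij}) is invertible, then 1ᵀ(I - δ(G+E_{ij}))^{-1}1 - 1ᵀ(I - δG)^{-1}1 = δ·[δ m_{ii} b_j² + δ m_{jj} b_i² + 2(1 - δ m_{ij}) b_i b_j]/D, where m_{ab} = m_{ab}(G) are entries of (I - δG)^{-1} and b_a are entries of (I - δG)^{-1}1. -/
/-!
Write `A = 1 - δG`, `B = 1 - δ(G + E)`, `b = A⁻¹1`, `c = B⁻¹1`. Since `A - B = δE`, the resolvent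
identity gives `c = b + δ A⁻¹ E c`. Because `E` only couples `i` and `j`, the `i`- and `j`-entries
of this identity form a `2 × 2` linear system for `(c i, c j)` with determinant `D`; and since
`A⁻¹` is symmetric, `1ᵀc - 1ᵀb = δ bᵀ E c = δ (b i c j + b j c i)`. Solving the system by Cramer's
rule gives the formula.
-/

open Matrix

section

variable {n R : Type*} [Fintype n]

theorem dotProduct_single_add_single_mulVec [DecidableEq n] [NonAssocSemiring R]
    (u v : n → R) (i j : n) :
    u ⬝ᵥ ((single i j (1 : R) + single j i 1) *ᵥ v) = u i * v j + u j * v i := by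
  simp [add_mulVec, single_mulVec, dotProduct, Function.update_apply, mul_add,
    Finset.sum_add_distrib]

theorem Matrix.IsSymm.sum_mulVec [CommSemiring R] {M : Matrix n n R} (hM : M.IsSymm)
    (x : n → R) : ∑ a, (M *ᵥ x) a = (M *ᵥ 1) ⬝ᵥ x := by
  rw [← one_dotProduct, dotProduct_mulVec, ← mulVec_transpose, hM.eq]

theorem Matrix.inv_mulVec_eq_add [DecidableEq n] [CommRing R] {A B : Matrix n n R}
    (hA : IsUnit A) (hB : IsUnit B) (v : n → R) :
    B⁻¹ *ᵥ v = A⁻¹ *ᵥ v + A⁻¹ *ᵥ ((A - B) *ᵥ (B⁻¹ *ᵥ v)) := by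
  have h : A⁻¹ * (A - B) * B⁻¹ = B⁻¹ - A⁻¹ := by
    rw [← neg_sub B A, Matrix.mul_neg, Matrix.neg_mul, ← inv_sub_inv (iff_of_true hA hB),
      neg_sub]
  rw [mulVec_mulVec, mulVec_mulVec, h, sub_mulVec, add_sub_cancel]

theorem pairing_of_swap_system {K : Type*} [Field K] {δ mii mij mjj bi bj ci cj : K}
    (hD : (1 - δ * mij) ^ 2 - δ ^ 2 * mii * mjj ≠ 0)
    (hci : ci - bi = δ * (mii * cj + mij * ci)) (hcj : cj - bj = δ * (mij * cj + mjj * ci)) :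
    δ * (bi * cj + bj * ci) =
      δ * (δ * mii * bj ^ 2 + δ * mjj * bi ^ 2 + 2 * (1 - δ * mij) * bi * bj) /
        ((1 - δ * mij) ^ 2 - δ ^ 2 * mii * mjj) := by
  rw [eq_div_iff hD]
  linear_combination (δ * (bj * (1 - δ * mij) + bi * δ * mjj)) * hci
    + (δ * (bj * δ * mii + bi * (1 - δ * mij))) * hcj

end

theorem key_link_formula_general {n : ℕ} (G : Matrix (Fin n) (Fin n) ℝ) (δ : ℝ)
    (i j : Fin n) (hsym : G.IsSymm)
    (h1 : IsUnit (1 - δ • G))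
    (h2 : IsUnit (1 - δ • (G + (Matrix.single i j (1 : ℝ) +
      Matrix.single j i (1 : ℝ)))))
    (hD : (1 - δ * ((1 - δ • G)⁻¹ i j)) ^ 2
        - δ ^ 2 * ((1 - δ • G)⁻¹ i i) * ((1 - δ • G)⁻¹ j j) ≠ 0) :
    ((∑ a, ((1 - δ • (G + (Matrix.single i j (1 : ℝ) +
          Matrix.single j i (1 : ℝ))))⁻¹ *ᵥ fun _ => (1 : ℝ)) a)
        - ∑ a, ((1 - δ • G)⁻¹ *ᵥ fun _ => (1 : ℝ)) a)
      = δ * (δ * ((1 - δ • G)⁻¹ i i) * (((1 - δ • G)⁻¹ *ᵥ fun _ => (1 : ℝ)) j) ^ 2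
            + δ * ((1 - δ • G)⁻¹ j j) * (((1 - δ • G)⁻¹ *ᵥ fun _ => (1 : ℝ)) i) ^ 2
            + 2 * (1 - δ * ((1 - δ • G)⁻¹ i j))
                * (((1 - δ • G)⁻¹ *ᵥ fun _ => (1 : ℝ)) i)
                * (((1 - δ • G)⁻¹ *ᵥ fun _ => (1 : ℝ)) j))
          / ((1 - δ * ((1 - δ • G)⁻¹ i j)) ^ 2
              - δ ^ 2 * ((1 - δ • G)⁻¹ i i) * ((1 - δ • G)⁻¹ j j)) := by
  set E := single i j (1 : ℝ) + single j i 1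
  have hAB : 1 - δ • G - (1 - δ • (G + E)) = δ • E := by rw [smul_add]; abel
  set A := 1 - δ • G
  set b := A⁻¹ *ᵥ fun _ => (1 : ℝ)
  set c := (1 - δ • (G + E))⁻¹ *ᵥ fun _ => (1 : ℝ)
  have hA : A⁻¹.IsSymm := (isSymm_one.sub (hsym.smul δ)).inv
  have hc : c - b = A⁻¹ *ᵥ (δ • (E *ᵥ c)) := by
    rw [← smul_mulVec, ← hAB, sub_eq_iff_eq_add']
    exact inv_mulVec_eq_add h1 h2 _
  have hsum : ∑ a, c a - ∑ a, b a = δ * (b i * c j + b j * c i) := by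
    rw [← Finset.sum_sub_distrib]
    change ∑ a, (c - b) a = _
    rw [hc, hA.sum_mulVec, dotProduct_smul, dotProduct_single_add_single_mulVec, smul_eq_mul]
    rfl
  have hc_apply (a : Fin n) : c a - b a = δ * (A⁻¹ a i * c j + A⁻¹ a j * c i) := by
    rw [← Pi.sub_apply, hc, mulVec_smul, Pi.smul_apply, smul_eq_mul]
    exact congrArg _ (dotProduct_single_add_single_mulVec (A⁻¹ a) c i j)
  have hci := hc_apply i
  have hcj := hc_apply j
  rw [hA.apply i j] at hcj
  rw [hsum]
  exact pairing_of_swap_system hD hci hcj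

theorem key_link_formula {n : ℕ} (G : Matrix (Fin n) (Fin n) ℝ) (δ : ℝ)
    (i j : Fin n) (hij : i ≠ j) (hsym : G.IsSymm)
    (h1 : IsUnit (1 - δ • G))
    (h2 : IsUnit (1 - δ • (G + (Matrix.single i j (1 : ℝ) +
      Matrix.single j i (1 : ℝ)))))
    (hD : (1 - δ * ((1 - δ • G)⁻¹ i j)) ^ 2
        - δ ^ 2 * ((1 - δ • G)⁻¹ i i) * ((1 - δ • G)⁻¹ j j) ≠ 0) :
    ((∑ a, ((1 - δ • (G + (Matrix.single i j (1 : ℝ) +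
          Matrix.single j i (1 : ℝ))))⁻¹ *ᵥ fun _ => (1 : ℝ)) a)
        - ∑ a, ((1 - δ • G)⁻¹ *ᵥ fun _ => (1 : ℝ)) a)
      = δ * (δ * ((1 - δ • G)⁻¹ i i) * (((1 - δ • G)⁻¹ *ᵥ fun _ => (1 : ℝ)) j) ^ 2
            + δ * ((1 - δ • G)⁻¹ j j) * (((1 - δ • G)⁻¹ *ᵥ fun _ => (1 : ℝ)) i) ^ 2
            + 2 * (1 - δ * ((1 - δ • G)⁻¹ i j))
                * (((1 - δ • G)⁻¹ *ᵥ fun _ => (1 : ℝ)) i)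
                * (((1 - δ • G)⁻¹ *ᵥ fun _ => (1 : ℝ)) j))
          / ((1 - δ * ((1 - δ • G)⁻¹ i j)) ^ 2
              - δ ^ 2 * ((1 - δ • G)⁻¹ i i) * ((1 - δ • G)⁻¹ j j)) :=
  key_link_formula_general G δ i j hsym h1 h2 hD
end
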